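/- arXiv:1911.11869 — 4 statements merged into one kernel-verified Lean document; each statement's English description precedes it below -/
import Mathlib

section
/- Let 0 < s < 1 and A ∈ L^∞(ℝⁿ; ℝⁿ). For u ∈ H^s(ℝⁿ), define the magnetic Gagliardo seminorm [u]_{H^s_A} := (∬ |u(x) − e^{i(x−y)·A((x+y)/2)} u(y)|² / |x−y|^{n+2s} dx dy)^{1/2}. Then there is a constant C' depending only on n, s, ‖A‖_∞ such that |[u]_{H^s} − [u]_{H^s_A}| ≤ C' ‖u‖_{L²}, where [u]_{H^s} is the standard Gagliardo seminorm. -/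
open MeasureTheory Complex Filter Topology

noncomputable section

variable {n : ℕ}

/-- The magnetic phase factor `E_A(x,y) = exp(i (x-y)·A((x+y)/2))`. -/
def phase (A : EuclideanSpace ℝ (Fin n) → EuclideanSpace ℝ (Fin n))
    (x y : EuclideanSpace ℝ (Fin n)) : ℂ :=
  Complex.exp (Complex.I * ((inner ℝ (x - y) (A ((2:ℝ)⁻¹ • (x + y))) : ℝ) : ℂ))

/-- Square of the magnetic Gagliardo seminorm `[u]_{H^s_A}²`. -/
def gagASq (s : ℝ) (A : EuclideanSpace ℝ (Fin n) → EuclideanSpace ℝ (Fin n))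
    (u : EuclideanSpace ℝ (Fin n) → ℂ) : ℝ :=
  ∫ x, ∫ y, ‖u x - phase A x y * u y‖ ^ 2 / ‖x - y‖ ^ ((n : ℝ) + 2 * s)

/-- Square of the standard Gagliardo seminorm `[u]_{H^s}²`. -/
def gagSq (s : ℝ) (u : EuclideanSpace ℝ (Fin n) → ℂ) : ℝ :=
  ∫ x, ∫ y, ‖u x - u y‖ ^ 2 / ‖x - y‖ ^ ((n : ℝ) + 2 * s)

/-- The `H^s` norm `(‖u‖_{L²}² + [u]_{H^s}²)^{1/2}`. -/
def hsNorm (s : ℝ) (u : EuclideanSpace ℝ (Fin n) → ℂ) : ℝ :=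
  Real.sqrt ((∫ x, ‖u x‖ ^ 2) + gagSq s u)

/-- The magnetic Sobolev norm `(‖u‖_{L²}² + [u]_{H^s_A}²)^{1/2}`. -/
def hsNormA (s : ℝ) (A : EuclideanSpace ℝ (Fin n) → EuclideanSpace ℝ (Fin n))
    (u : EuclideanSpace ℝ (Fin n) → ℂ) : ℝ :=
  Real.sqrt ((∫ x, ‖u x‖ ^ 2) + gagASq s A u)

/-- Membership in `H^s(ℝⁿ)`: square integrable with finite Gagliardo seminorm. -/
def memHs (s : ℝ) (u : EuclideanSpace ℝ (Fin n) → ℂ) : Prop :=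
  MemLp u 2 volume ∧
    Integrable (fun p : EuclideanSpace ℝ (Fin n) × EuclideanSpace ℝ (Fin n) =>
      ‖u p.1 - u p.2‖ ^ 2 / ‖p.1 - p.2‖ ^ ((n : ℝ) + 2 * s)) (volume.prod volume)

/-- `H̃^s(Ω)`: closure of `C_c^∞(Ω)` in the `H^s` norm. -/
def tildeHs (s : ℝ) (Ω : Set (EuclideanSpace ℝ (Fin n)))
    (u : EuclideanSpace ℝ (Fin n) → ℂ) : Prop :=
  ∃ f : ℕ → EuclideanSpace ℝ (Fin n) → ℂ,
    (∀ k, ContDiff ℝ (⊤ : ℕ∞) (f k) ∧ HasCompactSupport (f k) ∧ tsupport (f k) ⊆ Ω) ∧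
      Tendsto (fun k => hsNorm s (fun x => u x - f k x)) atTop (𝓝 0)

/-- The bilinear form `⟨𝓛^s_A u, v⟩` of the magnetic fractional operator. -/
def Lform (K : EuclideanSpace ℝ (Fin n) → EuclideanSpace ℝ (Fin n) → ℝ)
    (A : EuclideanSpace ℝ (Fin n) → EuclideanSpace ℝ (Fin n))
    (u v : EuclideanSpace ℝ (Fin n) → ℂ) : ℂ :=
  ∫ x, ∫ y, (u x - phase A x y * u y) *
    (v x - (starRingEnd ℂ) (phase A x y) * v y) * ((K x y : ℝ) : ℂ)

/-- The bilinear form `⟨𝓛^s u, v⟩` of the nonmagnetic fractional operator. -/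
def LformNM (K : EuclideanSpace ℝ (Fin n) → EuclideanSpace ℝ (Fin n) → ℝ)
    (u v : EuclideanSpace ℝ (Fin n) → ℂ) : ℂ :=
  ∫ x, ∫ y, (u x - u y) * (v x - v y) * ((K x y : ℝ) : ℂ)

/-- The sesquilinear form `B_{A,q}(u,v) = ⟨𝓛^s_A u, v̄⟩ + ∫_Ω q u v̄`. -/
def BAq (K : EuclideanSpace ℝ (Fin n) → EuclideanSpace ℝ (Fin n) → ℝ)
    (A : EuclideanSpace ℝ (Fin n) → EuclideanSpace ℝ (Fin n))
    (Ω : Set (EuclideanSpace ℝ (Fin n))) (q : EuclideanSpace ℝ (Fin n) → ℝ)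
    (u v : EuclideanSpace ℝ (Fin n) → ℂ) : ℂ :=
  Lform K A u (fun x => (starRingEnd ℂ) (v x)) +
    ∫ x in Ω, (q x : ℂ) * u x * (starRingEnd ℂ) (v x)

/-- `u` is a weak solution of `(𝓛^s_A + q)u = 0` in `Ω`, `u = g` in `Ω_e`. -/
def IsWeakSol (s : ℝ) (K : EuclideanSpace ℝ (Fin n) → EuclideanSpace ℝ (Fin n) → ℝ)
    (A : EuclideanSpace ℝ (Fin n) → EuclideanSpace ℝ (Fin n))
    (Ω : Set (EuclideanSpace ℝ (Fin n))) (q : EuclideanSpace ℝ (Fin n) → ℝ)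
    (g u : EuclideanSpace ℝ (Fin n) → ℂ) : Prop :=
  tildeHs s Ω (fun x => u x - g x) ∧ ∀ φ, tildeHs s Ω φ → BAq K A Ω q u φ = 0

/-- The kernel `K` is symmetric and comparable to `|x-y|^{-n-2s}`. -/
def KernelComp (s : ℝ) (K : EuclideanSpace ℝ (Fin n) → EuclideanSpace ℝ (Fin n) → ℝ)
    (C₁ C₂ : ℝ) : Prop :=
  (∀ x y, K x y = K y x) ∧ ∀ x y, x ≠ y →
    C₁ / ‖x - y‖ ^ ((n : ℝ) + 2 * s) ≤ K x y ∧ K x y ≤ C₂ / ‖x - y‖ ^ ((n : ℝ) + 2 * s)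



open scoped ENNReal NNReal
open Metric

lemma div_le_div_of_nonneg_right' {a b c : ℝ} (h : a ≤ b) (hc : 0 < c) : a / c ≤ b / c := by
  gcongr




lemma aux_ball_lintegral {E : Type*} [NormedAddCommGroup E] [NormedSpace ℝ E]
    [MeasurableSpace E] [BorelSpace E] [FiniteDimensional ℝ E]
    (μ : Measure E) [μ.IsAddHaarMeasure] {r : ℝ} (hr : r < Module.finrank ℝ E) :
    ∫⁻ z in ball (0 : E) 1, ENNReal.ofReal (‖z‖ ^ (-r)) ∂μ < ⊤ := by
  rcases le_or_gt r 0 with h0 | h0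
  · calc ∫⁻ z in ball (0 : E) 1, ENNReal.ofReal (‖z‖ ^ (-r)) ∂μ
        ≤ ∫⁻ _ in ball (0 : E) 1, 1 ∂μ := by
          refine setLIntegral_mono' measurableSet_ball fun z hz => ?_
          rw [mem_ball, dist_zero_right] at hz
          have : ‖z‖ ^ (-r) ≤ 1 :=
            Real.rpow_le_one (norm_nonneg _) hz.le (by linarith)
          simpa using ENNReal.ofReal_le_ofReal this
      _ = μ (ball 0 1) := by rw [setLIntegral_const, one_mul]
      _ < ⊤ := measure_ball_lt_top
  · -- dyadic decomposition
    set d : ℕ := Module.finrank ℝ E with hd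
    set q : ℝ := (2 : ℝ)⁻¹ with hq
    have hq0 : 0 < q := by norm_num [hq]
    have hq1 : q < 1 := by norm_num [hq]
    set A : ℕ → Set E := fun k => closedBall 0 (q ^ k) \ ball 0 (q ^ (k + 1)) with hA
    have hcover : ball (0 : E) 1 ⊆ {0} ∪ ⋃ k, A k := by
      intro z hz
      rw [mem_ball, dist_zero_right] at hz
      rcases eq_or_ne z 0 with rfl | hz0
      · exact Set.mem_union_left _ rfl
      · have hzpos : 0 < ‖z‖ := norm_pos_iff.mpr hz0
        have hex : ∃ k, q ^ (k + 1) ≤ ‖z‖ := by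
          obtain ⟨m, hm⟩ := exists_pow_lt_of_lt_one hzpos hq1
          exact ⟨m, by calc q ^ (m + 1) ≤ q ^ m := pow_le_pow_of_le_one hq0.le hq1.le (by omega)
                           _ ≤ ‖z‖ := (hm.le)⟩
        classical
        have h1 : q ^ (Nat.find hex + 1) ≤ ‖z‖ := Nat.find_spec hex
        have h2 : ‖z‖ ≤ q ^ (Nat.find hex) := by
          rcases Nat.eq_zero_or_pos (Nat.find hex) with h | h
          · rw [h]; simpa using hz.le
          · have hmin := Nat.find_min hex (show Nat.find hex - 1 < Nat.find hex by omega)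
            push_neg at hmin
            have heq : Nat.find hex - 1 + 1 = Nat.find hex := by omega
            rw [heq] at hmin
            exact hmin.le
        refine Set.mem_union_right _ (Set.mem_iUnion.mpr ⟨Nat.find hex, ?_⟩)
        constructor
        · simpa [dist_zero_right] using h2
        · simpa [dist_zero_right, not_lt] using h1
    have hsing : ∫⁻ z in ({0} : Set E), ENNReal.ofReal (‖z‖ ^ (-r)) ∂μ = 0 := by
      rw [lintegral_singleton]
      simp [Real.zero_rpow (by linarith : -r ≠ 0)]
    have hnat : ∀ m : ℕ, (q:ℝ) ^ m = q ^ (m:ℝ) := fun m => (Real.rpow_natCast q m).symm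
    have key : ∀ a b : ℝ, (q ^ a) ^ b = q ^ (a * b) := fun a b => (Real.rpow_mul hq0.le a b).symm
    have hterm : ∀ k : ℕ, ∫⁻ z in A k, ENNReal.ofReal (‖z‖ ^ (-r)) ∂μ ≤
        ENNReal.ofReal (q ^ (-r)) * μ (ball 0 1) * ENNReal.ofReal (q ^ ((d : ℝ) - r)) ^ k := by
      intro k
      have hqk1 : (0:ℝ) < q ^ (k + 1) := by positivity
      have hsub : A k ⊆ closedBall 0 (q ^ k) := by rw [hA]; exact Set.diff_subset
      have hstep : ∫⁻ z in A k, ENNReal.ofReal (‖z‖ ^ (-r)) ∂μ ≤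
          ENNReal.ofReal ((q ^ (k+1)) ^ (-r)) * (ENNReal.ofReal ((q ^ k) ^ d) * μ (ball 0 1)) := by
        calc ∫⁻ z in A k, ENNReal.ofReal (‖z‖ ^ (-r)) ∂μ
            ≤ ∫⁻ _ in A k, ENNReal.ofReal ((q ^ (k+1)) ^ (-r)) ∂μ := by
              refine setLIntegral_mono' (measurableSet_closedBall.diff measurableSet_ball)
                fun z hz => ?_
              have hz1 : q ^ (k+1) ≤ ‖z‖ := by
                have := hz.2
                simpa [dist_zero_right, not_lt] using this
              exact ENNReal.ofReal_le_ofReal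
                (Real.rpow_le_rpow_of_nonpos hqk1 hz1 (by linarith))
          _ = ENNReal.ofReal ((q ^ (k+1)) ^ (-r)) * μ (A k) := setLIntegral_const _ _
          _ ≤ _ := by
              rw [← μ.addHaar_closedBall 0 (by positivity : (0:ℝ) ≤ q ^ k)]
              exact mul_le_mul_right (measure_mono hsub) _
      refine hstep.trans (le_of_eq ?_)
      have hreal : (q ^ (k+1)) ^ (-r) * (q ^ k) ^ d = q ^ (-r) * (q ^ ((d:ℝ) - r)) ^ k := by
        rw [← pow_mul, hnat (k+1), hnat (k*d), key,
          ← Real.rpow_natCast (q ^ ((d:ℝ)-r)) k, key,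
          ← Real.rpow_add hq0, ← Real.rpow_add hq0]
        congr 1
        push_cast
        ring
      calc ENNReal.ofReal ((q ^ (k+1)) ^ (-r)) * (ENNReal.ofReal ((q ^ k) ^ d) * μ (ball 0 1))
          = ENNReal.ofReal ((q ^ (k+1)) ^ (-r) * (q ^ k) ^ d) * μ (ball 0 1) := by
            rw [ENNReal.ofReal_mul (by positivity)]; ring
        _ = ENNReal.ofReal (q ^ (-r) * (q ^ ((d:ℝ) - r)) ^ k) * μ (ball 0 1) := by rw [hreal]
        _ = _ := by
            rw [ENNReal.ofReal_mul (by positivity), ENNReal.ofReal_pow (by positivity)]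
            ring
    have hx1 : ENNReal.ofReal (q ^ ((d : ℝ) - r)) < 1 := by
      rw [← ENNReal.ofReal_one]
      exact ENNReal.ofReal_lt_ofReal_iff_of_nonneg (by positivity) |>.mpr
        (Real.rpow_lt_one hq0.le hq1 (by simp only [hd] at hr ⊢; linarith))
    calc ∫⁻ z in ball (0 : E) 1, ENNReal.ofReal (‖z‖ ^ (-r)) ∂μ
        ≤ ∫⁻ z in {0} ∪ ⋃ k, A k, ENNReal.ofReal (‖z‖ ^ (-r)) ∂μ := lintegral_mono_set hcover
      _ ≤ (∫⁻ z in ({0}:Set E), ENNReal.ofReal (‖z‖ ^ (-r)) ∂μ) +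
          ∫⁻ z in ⋃ k, A k, ENNReal.ofReal (‖z‖ ^ (-r)) ∂μ := lintegral_union_le _ _ _
      _ = ∫⁻ z in ⋃ k, A k, ENNReal.ofReal (‖z‖ ^ (-r)) ∂μ := by rw [hsing, zero_add]
      _ ≤ ∑' k, ∫⁻ z in A k, ENNReal.ofReal (‖z‖ ^ (-r)) ∂μ := lintegral_iUnion_le _ _
      _ ≤ ∑' k, ENNReal.ofReal (q ^ (-r)) * μ (ball 0 1) * ENNReal.ofReal (q ^ ((d : ℝ) - r)) ^ k :=
          ENNReal.tsum_le_tsum hterm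
      _ = ENNReal.ofReal (q ^ (-r)) * μ (ball 0 1) *
          (1 - ENNReal.ofReal (q ^ ((d : ℝ) - r)))⁻¹ := by
          rw [ENNReal.tsum_mul_left, ENNReal.tsum_geometric]
      _ < ⊤ := by
          refine ENNReal.mul_lt_top (ENNReal.mul_lt_top ENNReal.ofReal_lt_top
            measure_ball_lt_top) ?_
          rw [ENNReal.inv_lt_top]
          exact tsub_pos_of_lt hx1


lemma aux_kernel_lintegral {E : Type*} [NormedAddCommGroup E] [NormedSpace ℝ E]
    [MeasurableSpace E] [BorelSpace E] [FiniteDimensional ℝ E]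
    (μ : Measure E) [μ.IsAddHaarMeasure] {α c₁ : ℝ} (hc₁ : 0 ≤ c₁)
    (hα : (Module.finrank ℝ E : ℝ) < α) (hα2 : α - 2 < Module.finrank ℝ E) :
    ∫⁻ z, ENNReal.ofReal (min (c₁ * ‖z‖ ^ 2) 4 / ‖z‖ ^ α) ∂μ < ⊤ := by
  have hα0 : 0 < α := lt_of_le_of_lt (Nat.cast_nonneg _) hα
  set f : E → ENNReal := fun z => ENNReal.ofReal (min (c₁ * ‖z‖ ^ 2) 4 / ‖z‖ ^ α) with hf
  rw [← lintegral_add_compl f (measurableSet_ball (x := (0:E)) (ε := 1))]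
  have part1 : ∫⁻ z in ball (0:E) 1, f z ∂μ < ⊤ := by
    have hb : ∀ z : E, f z ≤ ENNReal.ofReal c₁ * ENNReal.ofReal (‖z‖ ^ (-(α - 2))) := by
      intro z
      rw [← ENNReal.ofReal_mul hc₁]
      rcases eq_or_ne z 0 with rfl | hz0
      · simp only [hf, norm_zero, Real.zero_rpow hα0.ne', div_zero]
        simp
      · have hzpos : 0 < ‖z‖ := norm_pos_iff.mpr hz0
        refine ENNReal.ofReal_le_ofReal ?_
        have h1 : min (c₁ * ‖z‖ ^ 2) 4 / ‖z‖ ^ α ≤ c₁ * ‖z‖ ^ 2 / ‖z‖ ^ α :=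
          div_le_div_of_nonneg_right' (min_le_left _ _) (Real.rpow_pos_of_pos hzpos α)
        refine h1.trans (le_of_eq ?_)
        rw [mul_div_assoc]
        congr 1
        rw [← Real.rpow_natCast ‖z‖ 2, ← Real.rpow_sub hzpos]
        norm_num
    calc ∫⁻ z in ball (0:E) 1, f z ∂μ
        ≤ ∫⁻ z in ball (0:E) 1, ENNReal.ofReal c₁ * ENNReal.ofReal (‖z‖ ^ (-(α-2))) ∂μ :=
          setLIntegral_mono' measurableSet_ball fun z _ => hb z
      _ = ENNReal.ofReal c₁ * ∫⁻ z in ball (0:E) 1, ENNReal.ofReal (‖z‖ ^ (-(α-2))) ∂μ := by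
          refine lintegral_const_mul'' _ (AEMeasurable.ennreal_ofReal ?_)
          fun_prop
      _ < ⊤ := ENNReal.mul_lt_top ENNReal.ofReal_lt_top (aux_ball_lintegral μ (by linarith))
  have part2 : ∫⁻ z in (ball (0:E) 1)ᶜ, f z ∂μ < ⊤ := by
    have hb : ∀ z : E, z ∈ (ball (0:E) 1)ᶜ →
        f z ≤ ENNReal.ofReal (4 * 2 ^ α) * ENNReal.ofReal ((1 + ‖z‖) ^ (-α)) := by
      intro z hz
      have hz1 : (1:ℝ) ≤ ‖z‖ := by simpa [dist_zero_right, not_lt] using hz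
      have hzpos : (0:ℝ) < ‖z‖ := lt_of_lt_of_le one_pos hz1
      rw [← ENNReal.ofReal_mul (by positivity)]
      refine ENNReal.ofReal_le_ofReal ?_
      have h1 : min (c₁ * ‖z‖ ^ 2) 4 / ‖z‖ ^ α ≤ 4 / ‖z‖ ^ α :=
        div_le_div_of_nonneg_right' (min_le_right _ _) (Real.rpow_pos_of_pos hzpos α)
      refine h1.trans ?_
      rw [div_eq_mul_inv, ← Real.rpow_neg hzpos.le]
      have key : ‖z‖ ^ (-α) ≤ 2 ^ α * (1 + ‖z‖) ^ (-α) := by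
        have h2 : (1 + ‖z‖) ^ α ≤ 2 ^ α * ‖z‖ ^ α := by
          rw [← Real.mul_rpow (by norm_num) (norm_nonneg _)]
          exact Real.rpow_le_rpow (by positivity) (by linarith) hα0.le
        rw [Real.rpow_neg hzpos.le, Real.rpow_neg (by positivity)]
        calc (‖z‖ ^ α)⁻¹ = 2 ^ α * (2 ^ α * ‖z‖ ^ α)⁻¹ := by
              rw [mul_inv, ← mul_assoc, mul_inv_cancel₀ (by positivity), one_mul]
          _ ≤ 2 ^ α * ((1 + ‖z‖) ^ α)⁻¹ := by gcongr
      calc 4 * ‖z‖ ^ (-α) ≤ 4 * (2 ^ α * (1 + ‖z‖) ^ (-α)) := by gcongr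
        _ = 4 * 2 ^ α * (1 + ‖z‖) ^ (-α) := by ring
    calc ∫⁻ z in (ball (0:E) 1)ᶜ, f z ∂μ
        ≤ ∫⁻ z in (ball (0:E) 1)ᶜ,
            ENNReal.ofReal (4 * 2 ^ α) * ENNReal.ofReal ((1 + ‖z‖) ^ (-α)) ∂μ :=
          setLIntegral_mono' measurableSet_ball.compl hb
      _ ≤ ∫⁻ z, ENNReal.ofReal (4 * 2 ^ α) * ENNReal.ofReal ((1 + ‖z‖) ^ (-α)) ∂μ :=
          setLIntegral_le_lintegral _ _
      _ = ENNReal.ofReal (4 * 2 ^ α) * ∫⁻ z, ENNReal.ofReal ((1 + ‖z‖) ^ (-α)) ∂μ := by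
          refine lintegral_const_mul'' _ (AEMeasurable.ennreal_ofReal ?_)
          fun_prop
      _ < ⊤ := ENNReal.mul_lt_top ENNReal.ofReal_lt_top (finite_integral_one_add_norm hα)
  exact ENNReal.add_lt_top.mpr ⟨part1, part2⟩


lemma phase_norm_one (A : EuclideanSpace ℝ (Fin n) → EuclideanSpace ℝ (Fin n)) (x y) :
    ‖phase A x y‖ = 1 := by
  rw [phase, mul_comm]
  exact Complex.norm_exp_ofReal_mul_I _



lemma norm_one_sub_phase_sq_le {M : ℝ} (hM : 0 ≤ M)
    {A : EuclideanSpace ℝ (Fin n) → EuclideanSpace ℝ (Fin n)} (hA : ∀ z, ‖A z‖ ≤ M) (x y) :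
    ‖1 - phase A x y‖ ^ 2 ≤ min (4 * M ^ 2 * ‖x - y‖ ^ 2) 4 := by
  set t : ℝ := (inner ℝ (x - y) (A ((2:ℝ)⁻¹ • (x + y))) : ℝ) with htdef
  have ht : |t| ≤ M * ‖x - y‖ := by
    refine (abs_real_inner_le_norm _ _).trans ?_
    rw [mul_comm]
    exact mul_le_mul_of_nonneg_right (hA _) (norm_nonneg _)
  have h2 : ‖1 - phase A x y‖ ≤ 2 := by
    calc ‖1 - phase A x y‖ ≤ ‖(1:ℂ)‖ + ‖phase A x y‖ := norm_sub_le _ _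
      _ = 2 := by rw [norm_one, phase_norm_one]; norm_num
  have hlin : ‖1 - phase A x y‖ ≤ 2 * |t| := by
    rcases le_or_gt (|t|) 1 with h | h
    · have habs : ‖Complex.I * (t:ℂ)‖ = |t| := by
        simp
      have := Complex.norm_exp_sub_one_le (x := Complex.I * (t:ℂ)) (by rw [habs]; exact h)
      rw [habs] at this
      calc ‖1 - phase A x y‖ = ‖phase A x y - 1‖ := norm_sub_rev _ _
        _ ≤ 2 * |t| := this
    · exact h2.trans (by nlinarith)
  rw [le_min_iff]
  constructor
  · have : ‖1 - phase A x y‖ ^ 2 ≤ (2 * |t|) ^ 2 := by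
      exact pow_le_pow_left₀ (norm_nonneg _) hlin 2
    refine this.trans ?_
    have : (2 * |t|) ^ 2 ≤ (2 * (M * ‖x - y‖)) ^ 2 := by
      have h0 : 0 ≤ 2 * |t| := by positivity
      nlinarith [abs_nonneg t]
    nlinarith
  · nlinarith [norm_nonneg (1 - phase A x y)]



lemma measurable_phase {A : EuclideanSpace ℝ (Fin n) → EuclideanSpace ℝ (Fin n)}
    (hA : Measurable A) :
    Measurable (fun p : EuclideanSpace ℝ (Fin n) × EuclideanSpace ℝ (Fin n) =>
      phase A p.1 p.2) := by
  unfold phase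
  refine Complex.measurable_exp.comp ?_
  refine (Complex.measurable_ofReal.comp ?_).const_mul Complex.I
  exact Measurable.inner (measurable_fst.sub measurable_snd)
    (hA.comp ((measurable_fst.add measurable_snd).const_smul ((2:ℝ)⁻¹)))


lemma coe_nnnorm_sq (z : ℂ) : (‖z‖₊ : ℝ≥0∞) ^ (2:ℕ) = ENNReal.ofReal (‖z‖ ^ 2) := by
  rw [ENNReal.ofReal_pow (norm_nonneg _), ofReal_norm, enorm_eq_nnnorm]

lemma eLpNorm_two {γ : Type*} [MeasurableSpace γ] (μ : Measure γ) (f : γ → ℂ) :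
    eLpNorm f 2 μ = (∫⁻ a, (‖f a‖₊ : ℝ≥0∞) ^ (2:ℕ) ∂μ) ^ (1/2 : ℝ) := by
  rw [eLpNorm_eq_lintegral_rpow_enorm_toReal two_ne_zero ENNReal.ofNat_ne_top]
  simp only [ENNReal.toReal_ofNat, enorm_eq_nnnorm]
  rw [show (∫⁻ a, (‖f a‖₊ : ℝ≥0∞) ^ (2:ℝ) ∂μ) = ∫⁻ a, (‖f a‖₊ : ℝ≥0∞) ^ (2:ℕ) ∂μ from
    lintegral_congr fun a => by rw [show (2:ℝ) = ((2:ℕ):ℝ) by norm_num, ENNReal.rpow_natCast]]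

lemma div_le_div_nonneg_denom {a b d : ℝ} (h : a ≤ b) (hd : 0 ≤ d) : a / d ≤ b / d := by
  rcases hd.eq_or_lt with h0 | h0
  · simp [← h0]
  · gcongr


/-- comparison of the magnetic and standard Gagliardo seminorms:
`|[u]_{H^s} - [u]_{H^s_A}| ≤ C' ‖u‖_{L²}` with `C'` depending only on `n, s, ‖A‖_∞`. -/
theorem seminorm_comparison (s : ℝ) (hs : 0 < s) (hs1 : s < 1) (M : ℝ) (hM : 0 ≤ M) :
    ∃ C' : ℝ, 0 < C' ∧
      ∀ A : EuclideanSpace ℝ (Fin n) → EuclideanSpace ℝ (Fin n), Measurable A →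
        (∀ z, ‖A z‖ ≤ M) →
      ∀ u : EuclideanSpace ℝ (Fin n) → ℂ, MemLp u 2 volume → memHs s u →
        |Real.sqrt (gagSq s u) - Real.sqrt (gagASq s A u)| ≤
          C' * ((eLpNorm u 2 volume).toReal) := by
  classical
  set E := EuclideanSpace ℝ (Fin n)
  set φbar : E → ℝ≥0∞ := fun z =>
    ENNReal.ofReal (min (4 * M ^ 2 * ‖z‖ ^ 2) 4 / ‖z‖ ^ ((n : ℝ) + 2 * s)) with hφbar
  set Kphi : ℝ≥0∞ := ∫⁻ z : E, φbar z ∂volume with hKphi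
  have hfin : Kphi < ⊤ := by
    rw [hKphi, hφbar]
    refine aux_kernel_lintegral (volume : Measure E) (c₁ := 4 * M ^ 2) (by positivity) ?_ ?_ <;>
      rw [show Module.finrank ℝ E = n from finrank_euclideanSpace_fin] <;> push_cast <;> linarith
  have hKhalf : Kphi ^ (1/2:ℝ) ≠ ⊤ :=
    (ENNReal.rpow_lt_top_of_nonneg (by norm_num) hfin.ne).ne
  refine ⟨(Kphi ^ (1/2:ℝ)).toReal + 1, by positivity, ?_⟩
  intro A hAmeas hAbd u hu hmem
  set ν : Measure (E × E) := volume.prod volume with hν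
  set c : E × E → ℝ := fun p => ‖p.1 - p.2‖ ^ (((n : ℝ) + 2 * s)/2) with hc
  set G : E × E → ℂ := fun p => (u p.1 - u p.2) * ((c p : ℝ) : ℂ)⁻¹ with hG
  set K : E × E → ℂ := fun p => ((1 - phase A p.1 p.2) * u p.2) * ((c p : ℝ) : ℂ)⁻¹ with hK
  set H : E × E → ℂ := fun p => (u p.1 - phase A p.1 p.2 * u p.2) * ((c p : ℝ) : ℂ)⁻¹ with hH
  have hc_nonneg : ∀ p, 0 ≤ c p := fun p => Real.rpow_nonneg (norm_nonneg _) _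
  have hcsq : ∀ p : E × E, c p ^ 2 = ‖p.1 - p.2‖ ^ ((n : ℝ) + 2 * s) := by
    intro p
    rw [hc, ← Real.rpow_natCast (‖p.1 - p.2‖ ^ (((n : ℝ) + 2 * s)/2)) 2,
      ← Real.rpow_mul (norm_nonneg _)]
    norm_num
  have hnormsq : ∀ (v : ℂ) (p : E × E),
      ‖v * ((c p : ℝ) : ℂ)⁻¹‖ ^ 2 = ‖v‖ ^ 2 / ‖p.1 - p.2‖ ^ ((n : ℝ) + 2 * s) := by
    intro v p
    rw [norm_mul, norm_inv, Complex.norm_real, Real.norm_eq_abs, _root_.abs_of_nonneg (hc_nonneg p),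
      mul_pow, inv_pow, hcsq p, div_eq_mul_inv]
  have hGsq : ∀ p : E × E, ‖G p‖ ^ 2 = ‖u p.1 - u p.2‖ ^ 2 / ‖p.1 - p.2‖ ^ ((n : ℝ) + 2 * s) :=
    fun p => hnormsq _ p
  have hHsq : ∀ p : E × E, ‖H p‖ ^ 2 =
      ‖u p.1 - phase A p.1 p.2 * u p.2‖ ^ 2 / ‖p.1 - p.2‖ ^ ((n : ℝ) + 2 * s) :=
    fun p => hnormsq _ p
  -- measurability
  have hum := hu.aestronglyMeasurable
  have hu1 : AEStronglyMeasurable (fun p : E × E => u p.1) ν :=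
    hum.comp_quasiMeasurePreserving Measure.quasiMeasurePreserving_fst
  have hu2 : AEStronglyMeasurable (fun p : E × E => u p.2) ν :=
    hum.comp_quasiMeasurePreserving Measure.quasiMeasurePreserving_snd
  have hcm : Measurable c := by
    rw [hc]; fun_prop
  have hcinv : Measurable fun p : E × E => ((c p : ℝ) : ℂ)⁻¹ :=
    (Complex.measurable_ofReal.comp hcm).inv
  have hem : Measurable fun p : E × E => phase A p.1 p.2 := measurable_phase hAmeas
  have hGm : AEStronglyMeasurable G ν := (hu1.sub hu2).mul hcinv.aestronglyMeasurable
  have hKm : AEStronglyMeasurable K ν :=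
    (((measurable_const.sub hem).aestronglyMeasurable).mul hu2).mul hcinv.aestronglyMeasurable
  have hHm : AEStronglyMeasurable H ν :=
    (hu1.sub (hem.aestronglyMeasurable.mul hu2)).mul hcinv.aestronglyMeasurable
  set L : ℝ≥0∞ := ∫⁻ x, (‖u x‖₊ : ℝ≥0∞) ^ (2:ℕ) ∂volume with hL
  have heLu : eLpNorm u 2 volume = L ^ (1/2:ℝ) := eLpNorm_two volume u
  have hLfin : L < ⊤ := by
    have h := hu.2
    rw [heLu] at h
    exact (ENNReal.rpow_lt_top_iff_of_pos (by norm_num)).mp h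
  -- G is in L²
  have hG2 : ∫⁻ p, (‖G p‖₊ : ℝ≥0∞) ^ (2:ℕ) ∂ν =
      ∫⁻ p : E × E, ENNReal.ofReal
        (‖u p.1 - u p.2‖ ^ 2 / ‖p.1 - p.2‖ ^ ((n : ℝ) + 2 * s)) ∂ν :=
    lintegral_congr fun p => by rw [coe_nnnorm_sq, hGsq p]
  have hgint := hmem.2
  have hGfin : ∫⁻ p, (‖G p‖₊ : ℝ≥0∞) ^ (2:ℕ) ∂ν < ⊤ := by
    rw [hG2]
    refine lt_of_le_of_lt (lintegral_mono fun p => Real.ofReal_le_enorm _) ?_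
    exact hgint.2
  have hMemG : MemLp G 2 ν :=
    ⟨hGm, by rw [eLpNorm_two]; exact ENNReal.rpow_lt_top_of_nonneg (by norm_num) hGfin.ne⟩
  -- K bound
  have hKptwise : ∀ p : E × E, (‖K p‖₊ : ℝ≥0∞) ^ (2:ℕ) ≤
      φbar (p.1 - p.2) * (‖u p.2‖₊ : ℝ≥0∞) ^ (2:ℕ) := by
    intro p
    rw [coe_nnnorm_sq, coe_nnnorm_sq, hφbar, ← ENNReal.ofReal_mul (by
      refine div_nonneg (le_min (by positivity) (by norm_num)) (Real.rpow_nonneg (norm_nonneg _) _))]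
    refine ENNReal.ofReal_le_ofReal ?_
    rw [hnormsq ((1 - phase A p.1 p.2) * u p.2) p, norm_mul, mul_pow, div_mul_eq_mul_div]
    refine div_le_div_nonneg_denom ?_ (Real.rpow_nonneg (norm_nonneg _) _)
    exact mul_le_mul_of_nonneg_right (norm_one_sub_phase_sq_le hM hAbd p.1 p.2) (sq_nonneg _)
  have hφmeas : Measurable fun p : E × E => φbar (p.1 - p.2) := by
    rw [hφbar]; fun_prop
  have hu2nn : AEMeasurable (fun p : E × E => (‖u p.2‖₊ : ℝ≥0∞) ^ (2:ℕ)) ν :=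
    (hu2.enorm).pow_const 2
  have hK2 : ∫⁻ p, (‖K p‖₊ : ℝ≥0∞) ^ (2:ℕ) ∂ν ≤ Kphi * L := by
    calc ∫⁻ p, (‖K p‖₊ : ℝ≥0∞) ^ (2:ℕ) ∂ν
        ≤ ∫⁻ p : E × E, φbar (p.1 - p.2) * (‖u p.2‖₊ : ℝ≥0∞) ^ (2:ℕ) ∂ν :=
          lintegral_mono hKptwise
      _ = ∫⁻ y, ∫⁻ x, φbar (x - y) * (‖u y‖₊ : ℝ≥0∞) ^ (2:ℕ) ∂volume ∂volume := by
          rw [hν]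
          exact lintegral_prod_symm _ (hφmeas.aemeasurable.mul hu2nn)
      _ = ∫⁻ y, (∫⁻ x, φbar (x - y) ∂volume) * (‖u y‖₊ : ℝ≥0∞) ^ (2:ℕ) ∂volume := by
          refine lintegral_congr fun y => ?_
          exact lintegral_mul_const'' _ (hφmeas.comp (measurable_id.prodMk measurable_const)).aemeasurable
      _ = ∫⁻ y, Kphi * (‖u y‖₊ : ℝ≥0∞) ^ (2:ℕ) ∂volume := by
          refine lintegral_congr fun y => ?_
          congr 1
          calc ∫⁻ x, φbar (x - y) ∂volume = ∫⁻ x, φbar (x + (-y)) ∂volume := by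
                simp only [sub_eq_add_neg]
            _ = Kphi := lintegral_add_right_eq_self φbar (-y)
      _ = Kphi * L := lintegral_const_mul'' _ ((hum.enorm).pow_const 2)
  have hKL : eLpNorm K 2 ν ≤ Kphi ^ (1/2:ℝ) * eLpNorm u 2 volume := by
    rw [eLpNorm_two ν K, heLu, ← ENNReal.mul_rpow_of_nonneg _ _ (by norm_num : (0:ℝ) ≤ 1/2)]
    exact ENNReal.rpow_le_rpow hK2 (by norm_num)
  have hMemK : MemLp K 2 ν := by
    refine ⟨hKm, lt_of_le_of_lt hKL ?_⟩
    exact ENNReal.mul_lt_top (ENNReal.rpow_lt_top_of_nonneg (by norm_num) hfin.ne) hu.2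
  have hHeq : H = fun p => G p + K p := by
    funext p
    rw [hH, hG, hK]
    ring
  have hHeq2 : H = G + K := hHeq
  have hMemH : MemLp H 2 ν := by rw [hHeq]; exact hMemG.add hMemK
  -- integrability of magnetic integrand
  have hintH : Integrable (fun p : E × E =>
      ‖u p.1 - phase A p.1 p.2 * u p.2‖ ^ 2 / ‖p.1 - p.2‖ ^ ((n : ℝ) + 2 * s)) ν := by
    refine (hMemH.integrable_norm_rpow two_ne_zero ENNReal.ofNat_ne_top).congr
      (Filter.Eventually.of_forall fun p => ?_)
    simp only [ENNReal.toReal_ofNat, Real.rpow_two]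
    exact hHsq p
  -- integral identities
  have hgagL : gagSq s u = (∫⁻ p, (‖G p‖₊ : ℝ≥0∞) ^ (2:ℕ) ∂ν).toReal := by
    have h1 : gagSq s u = ∫ p : E × E,
        ‖u p.1 - u p.2‖ ^ 2 / ‖p.1 - p.2‖ ^ ((n : ℝ) + 2 * s) ∂ν := by
      rw [gagSq, hν]
      exact integral_integral hmem.2
    rw [h1, integral_eq_lintegral_of_nonneg_ae
      (Filter.Eventually.of_forall fun p => by positivity) hmem.2.1, hG2]
  have hgagAL : gagASq s A u = (∫⁻ p, (‖H p‖₊ : ℝ≥0∞) ^ (2:ℕ) ∂ν).toReal := by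
    have h1 : gagASq s A u = ∫ p : E × E,
        ‖u p.1 - phase A p.1 p.2 * u p.2‖ ^ 2 / ‖p.1 - p.2‖ ^ ((n : ℝ) + 2 * s) ∂ν := by
      rw [gagASq, hν]
      exact integral_integral hintH
    rw [h1, integral_eq_lintegral_of_nonneg_ae
      (Filter.Eventually.of_forall fun p => by positivity) hintH.1]
    congr 1
    exact lintegral_congr fun p => by rw [coe_nnnorm_sq, hHsq p]
  have hsqrtG : Real.sqrt (gagSq s u) = (eLpNorm G 2 ν).toReal := by
    rw [hgagL, Real.sqrt_eq_rpow, ENNReal.toReal_rpow, eLpNorm_two]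
  have hsqrtH : Real.sqrt (gagASq s A u) = (eLpNorm H 2 ν).toReal := by
    rw [hgagAL, Real.sqrt_eq_rpow, ENNReal.toReal_rpow, eLpNorm_two]
  -- triangle inequality
  have ha : eLpNorm G 2 ν ≠ ⊤ := hMemG.2.ne
  have hb : eLpNorm H 2 ν ≠ ⊤ := hMemH.2.ne
  have hk : eLpNorm K 2 ν ≠ ⊤ := hMemK.2.ne
  have tri1 : eLpNorm H 2 ν ≤ eLpNorm G 2 ν + eLpNorm K 2 ν := by
    rw [hHeq2]
    exact eLpNorm_add_le hGm hKm one_le_two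
  have tri2 : eLpNorm G 2 ν ≤ eLpNorm H 2 ν + eLpNorm K 2 ν := by
    have hGeq : G = H + (-K) := by
      funext p
      simp only [Pi.add_apply, Pi.neg_apply, hHeq2, hG, hK, Pi.add_apply]
      ring
    calc eLpNorm G 2 ν = eLpNorm (H + (-K)) 2 ν := by rw [hGeq]
      _ ≤ eLpNorm H 2 ν + eLpNorm (-K) 2 ν := eLpNorm_add_le hHm hKm.neg one_le_two
      _ = eLpNorm H 2 ν + eLpNorm K 2 ν := by rw [eLpNorm_neg]
  have h1 : (eLpNorm G 2 ν).toReal ≤ (eLpNorm H 2 ν).toReal + (eLpNorm K 2 ν).toReal := by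
    have := ENNReal.toReal_mono (ENNReal.add_ne_top.mpr ⟨hb, hk⟩) tri2
    rwa [ENNReal.toReal_add hb hk] at this
  have h2 : (eLpNorm H 2 ν).toReal ≤ (eLpNorm G 2 ν).toReal + (eLpNorm K 2 ν).toReal := by
    have := ENNReal.toReal_mono (ENNReal.add_ne_top.mpr ⟨ha, hk⟩) tri1
    rwa [ENNReal.toReal_add ha hk] at this
  have hfinal : (eLpNorm K 2 ν).toReal ≤
      ((Kphi ^ (1/2:ℝ)).toReal + 1) * (eLpNorm u 2 volume).toReal := by
    have hrhs : Kphi ^ (1/2:ℝ) * eLpNorm u 2 volume ≠ ⊤ :=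
      ENNReal.mul_ne_top hKhalf hu.2.ne
    have := ENNReal.toReal_mono hrhs hKL
    rw [ENNReal.toReal_mul] at this
    refine this.trans ?_
    have h0 : (0:ℝ) ≤ (eLpNorm u 2 volume).toReal := ENNReal.toReal_nonneg
    nlinarith [ENNReal.toReal_nonneg (a := Kphi ^ (1/2:ℝ))]
  rw [hsqrtG, hsqrtH]
  rw [abs_sub_le_iff]
  constructor <;> linarith
end
end

section
/- Let 0 < s < 1 and A ∈ L^∞(ℝⁿ; ℝⁿ). Then the magnetic Sobolev norm ‖u‖_{H^s_A} := (‖u‖²_{L²} + [u]²_{H^s_A})^{1/2} is equivalent to the standard H^s(ℝⁿ) norm: there exist constants c, C > 0 with c‖u‖_{H^s} ≤ ‖u‖_{H^s_A} ≤ C‖u‖_{H^s} for all u ∈ H^s(ℝⁿ). -/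
open MeasureTheory Complex Filter Topology

set_option maxHeartbeats 1000000

noncomputable section

variable {n : ℕ}

section Aux

open Set Real Module Filter

/-- `|e^{iθ} - 1| ≤ |θ|`. -/
lemma exp_I_sub_one_le (θ : ℝ) : ‖Complex.exp (Complex.I * θ) - 1‖ ≤ |θ| := by
  have h1 : Complex.I * θ = (θ:ℂ) * Complex.I := by ring
  rw [h1]
  have hre : (Complex.exp ((θ:ℂ)*Complex.I) - 1).re = Real.cos θ - 1 := by
    simp [Complex.exp_ofReal_mul_I_re]
  have him : (Complex.exp ((θ:ℂ)*Complex.I) - 1).im = Real.sin θ := by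
    simp [Complex.exp_ofReal_mul_I_im]
  have hcos : Real.cos θ = 1 - 2 * Real.sin (θ/2) ^ 2 := by
    have h2 := Real.cos_two_mul (θ/2)
    have h3 := Real.sin_sq_add_cos_sq (θ/2)
    have h4 : 2 * (θ/2) = θ := by ring
    rw [h4] at h2; nlinarith
  have hsin : |Real.sin (θ/2)| ≤ |θ/2| := Real.abs_sin_le_abs
  have hsq : Real.sin (θ/2)^2 ≤ (θ/2)^2 := by
    rw [← _root_.sq_abs, ← _root_.sq_abs (θ/2)]
    exact pow_le_pow_left₀ (abs_nonneg _) hsin 2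
  have key : ‖Complex.exp ((θ:ℂ)*Complex.I) - 1‖^2 ≤ θ^2 := by
    rw [Complex.sq_norm, Complex.normSq_apply, hre, him]
    nlinarith [Real.sin_sq_add_cos_sq θ]
  calc ‖Complex.exp ((θ:ℂ)*Complex.I) - 1‖
      = Real.sqrt (‖Complex.exp ((θ:ℂ)*Complex.I) - 1‖^2) := (Real.sqrt_sq (norm_nonneg _)).symm
    _ ≤ Real.sqrt (θ^2) := Real.sqrt_le_sqrt key
    _ = |θ| := Real.sqrt_sq_eq_abs θ

lemma integrableOn_ball_norm_rpow_neg {n : ℕ} {r : ℝ} (h0 : 0 < r) (hr : r < n) :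
    IntegrableOn (fun z : EuclideanSpace ℝ (Fin n) => ‖z‖ ^ (-r)) (Metric.ball 0 1) volume := by
  set V := EuclideanSpace ℝ (Fin n)
  set ν : Measure V := volume.restrict (Metric.ball (0:V) 1) with hν
  have hmeas : Measurable (fun z : V => ‖z‖ ^ (-r)) := (measurable_norm).pow_const _
  refine ⟨hmeas.aestronglyMeasurable, ?_⟩
  have hnn : 0 ≤ᵐ[ν] fun z : V => ‖z‖ ^ (-r) :=
    Eventually.of_forall fun z => Real.rpow_nonneg (norm_nonneg _) _
  rw [hasFiniteIntegral_iff_norm]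
  have hcongr : ∀ z : V, ENNReal.ofReal ‖‖z‖ ^ (-r)‖ = ENNReal.ofReal (‖z‖ ^ (-r)) := by
    intro z; rw [Real.norm_eq_abs, _root_.abs_of_nonneg (Real.rpow_nonneg (norm_nonneg _) _)]
  simp_rw [hcongr]
  rw [lintegral_eq_lintegral_meas_le ν hnn hmeas.aemeasurable]
  have hsub : ∀ t : ℝ, 0 < t →
      {a : V | t ≤ ‖a‖ ^ (-r)} ⊆ Metric.closedBall 0 (t ^ (-r⁻¹)) := by
    intro t ht a ha
    simp only [mem_setOf_eq] at ha
    rcases eq_or_ne a 0 with rfl | h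
    · simp only [Metric.mem_closedBall, dist_self]
      positivity
    · have hnorm : 0 < ‖a‖ := norm_pos_iff.2 h
      rw [Metric.mem_closedBall, dist_zero_right, ← inv_neg]
      exact ((Real.le_rpow_inv_iff_of_neg hnorm ht (neg_lt_zero.2 h0)).2 ha)
  set B := volume (Metric.ball (0:V) 1) with hB
  have hBlt : B < ⊤ := measure_ball_lt_top
  have hsplit : ∫⁻ t in Ioi (0:ℝ), ν {a : V | t ≤ ‖a‖ ^ (-r)} ≤
      (∫⁻ t in Ioc (0:ℝ) 1, ν {a : V | t ≤ ‖a‖ ^ (-r)}) +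
      ∫⁻ t in Ioi (1:ℝ), ν {a : V | t ≤ ‖a‖ ^ (-r)} :=
    le_trans (lintegral_mono_set Ioi_subset_Ioc_union_Ioi) (lintegral_union_le _ _ _)
  refine lt_of_le_of_lt hsplit (ENNReal.add_lt_top.2 ⟨?_, ?_⟩)
  · calc ∫⁻ t in Ioc (0:ℝ) 1, ν {a : V | t ≤ ‖a‖ ^ (-r)}
        ≤ ∫⁻ _ in Ioc (0:ℝ) 1, B := by
          refine lintegral_mono fun t => ?_
          exact le_trans (measure_mono (subset_univ _)) (by rw [hν, Measure.restrict_apply_univ])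
      _ = B * volume (Ioc (0:ℝ) 1) := by rw [lintegral_const, Measure.restrict_apply_univ]
      _ < ⊤ := by
          apply ENNReal.mul_lt_top hBlt
          simp [Real.volume_Ioc]
  · have hb : ∀ t ∈ Ioi (1:ℝ), ν {a : V | t ≤ ‖a‖ ^ (-r)} ≤
        ENNReal.ofReal (t ^ (-(r⁻¹ * n))) * B := by
      intro t ht
      have ht0 : (0:ℝ) < t := lt_trans zero_lt_one ht
      have h1 : ν {a : V | t ≤ ‖a‖ ^ (-r)} ≤ volume (Metric.closedBall (0:V) (t ^ (-r⁻¹))) :=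
        le_trans (Measure.restrict_le_self _) (measure_mono (hsub t ht0))
      rw [Measure.addHaar_closedBall _ _ (by positivity : (0:ℝ) ≤ t ^ (-r⁻¹))] at h1
      rw [← Real.rpow_natCast (t ^ (-r⁻¹)) _, ← Real.rpow_mul ht0.le] at h1
      have hfr : (finrank ℝ V : ℝ) = (n:ℝ) := by
        rw [show finrank ℝ V = n from by simp [V, finrank_euclideanSpace]]
      rw [hfr] at h1
      rw [neg_mul] at h1
      exact h1
    calc ∫⁻ t in Ioi (1:ℝ), ν {a : V | t ≤ ‖a‖ ^ (-r)}
        ≤ ∫⁻ t in Ioi (1:ℝ), ENNReal.ofReal (t ^ (-(r⁻¹ * n))) * B :=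
          setLIntegral_mono' measurableSet_Ioi hb
      _ = (∫⁻ t in Ioi (1:ℝ), ENNReal.ofReal (t ^ (-(r⁻¹ * n)))) * B :=
          lintegral_mul_const' _ _ hBlt.ne
      _ < ⊤ := by
          apply ENNReal.mul_lt_top _ hBlt
          have hint : IntegrableOn (fun t : ℝ => t ^ (-(r⁻¹ * n))) (Ioi 1) volume := by
            apply integrableOn_Ioi_rpow_of_lt _ zero_lt_one
            have : (1:ℝ) < r⁻¹ * n := by
              rw [inv_mul_eq_div, lt_div_iff₀ h0, one_mul]; exact hr
            linarith
          have := hint.setLIntegral_lt_top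
          exact lt_of_le_of_lt (le_of_eq rfl) this

/-- The comparison kernel `min(M|z|, 2)² / |z|^{n+2s}` is integrable. -/
lemma gfun_integrable {n : ℕ} {s M : ℝ} (hs : 0 < s) (hs1 : s < 1) (hM : 0 ≤ M) :
    Integrable (fun z : EuclideanSpace ℝ (Fin n) =>
      (min (M * ‖z‖) 2)^2 / ‖z‖ ^ ((n : ℝ) + 2 * s)) volume := by
  set V := EuclideanSpace ℝ (Fin n)
  set p : ℝ := (n : ℝ) + 2 * s with hp
  have hp0 : 0 < p := by positivity
  set g : V → ℝ := fun z => (min (M * ‖z‖) 2)^2 / ‖z‖ ^ p with hg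
  have hgmeas : Measurable g := by
    apply Measurable.div
    · exact ((measurable_norm.const_mul M).min measurable_const).pow_const 2
    · exact measurable_norm.pow_const p
  have hgnonneg : ∀ z, 0 ≤ g z := fun z => by
    apply div_nonneg (sq_nonneg _) (Real.rpow_nonneg (norm_nonneg _) _)
  -- bound near zero
  have hball : IntegrableOn g (Metric.ball (0:V) 1) volume := by
    have hbd : ∀ z : V, g z ≤ M^2 * ‖z‖ ^ (2 - p) := by
      intro z
      rcases eq_or_ne z 0 with rfl | hz
      · have : g 0 = 0 := by
          simp [hg, norm_zero, Real.zero_rpow hp0.ne', div_zero]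
        rw [this]
        positivity
      · have hz0 : 0 < ‖z‖ := norm_pos_iff.2 hz
        have hd : 0 < ‖z‖ ^ p := Real.rpow_pos_of_pos hz0 _
        have hnum : (min (M * ‖z‖) 2)^2 ≤ (M * ‖z‖)^2 := by
          apply pow_le_pow_left₀ (le_min (by positivity) (by norm_num)) (min_le_left _ _)
        calc g z ≤ (M * ‖z‖)^2 / ‖z‖ ^ p := by
              apply div_le_div_of_nonneg_right hnum hd.le |>.trans_eq rfl
          _ = M^2 * ‖z‖ ^ (2 - p) := by
              rw [Real.rpow_sub hz0, mul_pow, ← Real.rpow_two]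
              field_simp
              norm_cast
    rcases le_or_gt 0 (2 - p) with he | he
    · -- bounded by M^2 on the ball
      have : IntegrableOn (fun _ : V => M^2) (Metric.ball (0:V) 1) volume :=
        integrableOn_const measure_ball_lt_top.ne
      apply this.mono' (hgmeas.aestronglyMeasurable.restrict)
      filter_upwards [ae_restrict_mem measurableSet_ball] with z hz
      rw [Real.norm_of_nonneg (hgnonneg z)]
      refine (hbd z).trans ?_
      have h1 : ‖z‖ ^ (2 - p) ≤ 1 := by
        rcases eq_or_ne z 0 with rfl | hz0
        · rcases eq_or_lt_of_le he with he0 | he0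
          · simp [← he0]
          · simp [norm_zero, Real.zero_rpow he0.ne']
        · apply Real.rpow_le_one (norm_nonneg _) _ he
          have h5 := Metric.mem_ball.1 hz
          rw [dist_zero_right] at h5
          exact h5.le
      nlinarith [sq_nonneg M]
    · -- use the singular-integral lemma
      have hr0 : 0 < p - 2 := by linarith
      have hrn : p - 2 < n := by
        rw [hp]; linarith
      have := (integrableOn_ball_norm_rpow_neg hr0 hrn).const_mul (M^2)
      apply this.mono' (hgmeas.aestronglyMeasurable.restrict)
      filter_upwards [ae_restrict_mem measurableSet_ball] with z _
      rw [Real.norm_of_nonneg (hgnonneg z)]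
      have : -(p - 2) = 2 - p := by ring
      rw [this]
      exact hbd z
  -- bound away from zero
  have houter : IntegrableOn g (Metric.ball (0:V) 1)ᶜ volume := by
    have hpn : (finrank ℝ V : ℝ) < p := by
      have : finrank ℝ V = n := by simp [V, finrank_euclideanSpace]
      rw [this, hp]; linarith
    have hint : Integrable (fun z : V => 4 * (2:ℝ) ^ p * (1 + ‖z‖) ^ (-p)) volume :=
      (integrable_one_add_norm hpn).const_mul _
    apply (hint.integrableOn).mono' (hgmeas.aestronglyMeasurable.restrict)
    filter_upwards [ae_restrict_mem measurableSet_ball.compl] with z hz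
    rw [Real.norm_of_nonneg (hgnonneg z)]
    have hz1 : 1 ≤ ‖z‖ := by
      simpa [Metric.mem_ball, dist_zero_right, not_lt] using hz
    have hz0 : 0 < ‖z‖ := lt_of_lt_of_le zero_lt_one hz1
    have hd : 0 < ‖z‖ ^ p := Real.rpow_pos_of_pos hz0 _
    have hnum : (min (M * ‖z‖) 2)^2 ≤ 4 := by
      have h1 : min (M * ‖z‖) 2 ≤ 2 := min_le_right _ _
      have h2 : 0 ≤ min (M * ‖z‖) 2 := le_min (by positivity) (by norm_num)
      nlinarith
    have key : (1 + ‖z‖) ^ p ≤ 2 ^ p * ‖z‖ ^ p := by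
      rw [← Real.mul_rpow (by norm_num) hz0.le]
      apply Real.rpow_le_rpow (by positivity) (by linarith) hp0.le
    have hpos : 0 < (1 + ‖z‖) ^ p := Real.rpow_pos_of_pos (by positivity) _
    calc g z ≤ 4 / ‖z‖ ^ p := div_le_div_of_nonneg_right hnum hd.le |>.trans_eq rfl
      _ ≤ 4 * (2:ℝ)^p / (1 + ‖z‖) ^ p := by
          rw [div_le_div_iff₀ hd hpos]
          calc 4 * (1 + ‖z‖) ^ p ≤ 4 * (2 ^ p * ‖z‖ ^ p) := by
                apply mul_le_mul_of_nonneg_left key (by norm_num)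
            _ = 4 * 2 ^ p * ‖z‖ ^ p := by ring
      _ = 4 * (2:ℝ)^p * (1 + ‖z‖) ^ (-p) := by
          rw [Real.rpow_neg (by positivity)]
          ring
  rw [← integrableOn_univ, ← Set.union_compl_self (Metric.ball (0:V) 1)]
  exact hball.union houter

end Aux

/-- equivalence of the magnetic Sobolev norm with the standard `H^s` norm:
`c‖u‖_{H^s} ≤ ‖u‖_{H^s_A} ≤ C‖u‖_{H^s}`. -/
theorem magnetic_norm_equivalence (s : ℝ) (hs : 0 < s) (hs1 : s < 1)
    (A : EuclideanSpace ℝ (Fin n) → EuclideanSpace ℝ (Fin n)) (M : ℝ)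
    (hA : Measurable A) (hM : ∀ z, ‖A z‖ ≤ M) :
    ∃ c C : ℝ, 0 < c ∧ 0 < C ∧
      ∀ u : EuclideanSpace ℝ (Fin n) → ℂ, MemLp u 2 volume → memHs s u →
        c * hsNorm s u ≤ hsNormA s A u ∧ hsNormA s A u ≤ C * hsNorm s u := by
  classical
  set p : ℝ := (n : ℝ) + 2 * s with hpdef
  have hp0 : 0 < p := by positivity
  have hM0 : 0 ≤ M := le_trans (norm_nonneg (A 0)) (hM 0)
  set g : (EuclideanSpace ℝ (Fin n)) → ℝ := fun z => (min (M * ‖z‖) 2)^2 / ‖z‖ ^ p with hgdef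
  have hg : Integrable g volume := gfun_integrable hs hs1 hM0
  have hgnonneg : ∀ z, 0 ≤ g z := fun z =>
    div_nonneg (sq_nonneg _) (Real.rpow_nonneg (norm_nonneg _) _)
  set C₀ : ℝ := ∫ z, g z with hC₀def
  have hC₀ : 0 ≤ C₀ := integral_nonneg hgnonneg
  -- bound on the phase factor
  have hph1 : ∀ x y : (EuclideanSpace ℝ (Fin n)), ‖1 - phase A x y‖ ≤ min (M * ‖x - y‖) 2 := by
    intro x y
    set θ : ℝ := (inner ℝ (x - y) (A ((2:ℝ)⁻¹ • (x + y))) : ℝ) with hθ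
    have h1 : ‖1 - phase A x y‖ = ‖Complex.exp (Complex.I * θ) - 1‖ := by
      rw [norm_sub_rev]; rfl
    apply le_min
    · rw [h1]
      refine (exp_I_sub_one_le θ).trans ?_
      calc |θ| ≤ ‖x - y‖ * ‖A ((2:ℝ)⁻¹ • (x + y))‖ := abs_real_inner_le_norm _ _
        _ ≤ ‖x - y‖ * M := by
            apply mul_le_mul_of_nonneg_left (hM _) (norm_nonneg _)
        _ = M * ‖x - y‖ := by ring
    · rw [h1]
      calc ‖Complex.exp (Complex.I * θ) - 1‖
          ≤ ‖Complex.exp (Complex.I * θ)‖ + ‖(1:ℂ)‖ := norm_sub_le _ _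
        _ = 2 := by
            have : Complex.I * θ = (θ:ℂ) * Complex.I := by ring
            rw [this, Complex.norm_exp_ofReal_mul_I]
            norm_num
  set K : ℝ := 2 + 2 * C₀ with hKdef
  have hK2 : (2:ℝ) ≤ K := by linarith
  have hK0 : 0 < K := by linarith
  refine ⟨(Real.sqrt K)⁻¹, Real.sqrt K, by positivity, by positivity, ?_⟩
  intro u hu2 hmem
  set L : ℝ := ∫ x, ‖u x‖^2 with hLdef
  have hL : Integrable (fun x : (EuclideanSpace ℝ (Fin n)) => ‖u x‖^2) volume := hu2.norm.integrable_sq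
  have hL0 : 0 ≤ L := integral_nonneg fun x => sq_nonneg _
  obtain ⟨-, hnmInt⟩ := hmem
  set nmP : (EuclideanSpace ℝ (Fin n)) × (EuclideanSpace ℝ (Fin n)) → ℝ := fun q => ‖u q.1 - u q.2‖ ^ 2 / ‖q.1 - q.2‖ ^ p with hnmP
  set magP : (EuclideanSpace ℝ (Fin n)) × (EuclideanSpace ℝ (Fin n)) → ℝ := fun q => ‖u q.1 - phase A q.1 q.2 * u q.2‖ ^ 2 / ‖q.1 - q.2‖ ^ p
    with hmagP
  set G : (EuclideanSpace ℝ (Fin n)) × (EuclideanSpace ℝ (Fin n)) → ℝ := fun q => g (q.1 - q.2) * ‖u q.2‖^2 with hGdef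
  have hnmP_nonneg : ∀ q, 0 ≤ nmP q := fun q =>
    div_nonneg (sq_nonneg _) (Real.rpow_nonneg (norm_nonneg _) _)
  have hmagP_nonneg : ∀ q, 0 ≤ magP q := fun q =>
    div_nonneg (sq_nonneg _) (Real.rpow_nonneg (norm_nonneg _) _)
  have hG_nonneg : ∀ q, 0 ≤ G q := fun q => mul_nonneg (hgnonneg _) (sq_nonneg _)
  -- integrability of G and its integral
  have hGbase : Integrable (fun q : (EuclideanSpace ℝ (Fin n)) × (EuclideanSpace ℝ (Fin n)) => g q.1 * ‖u q.2‖^2) (volume.prod volume) :=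
    hg.mul_prod hL
  have hT : MeasurePreserving (fun q : (EuclideanSpace ℝ (Fin n)) × (EuclideanSpace ℝ (Fin n)) => (q.1 - q.2, q.2))
      ((volume : Measure (EuclideanSpace ℝ (Fin n))).prod volume) ((volume : Measure (EuclideanSpace ℝ (Fin n))).prod volume) :=
    measurePreserving_sub_prod volume volume
  have hTemb : MeasurableEmbedding (fun q : (EuclideanSpace ℝ (Fin n)) × (EuclideanSpace ℝ (Fin n)) => (q.1 - q.2, q.2)) := by
    let e : ((EuclideanSpace ℝ (Fin n)) × (EuclideanSpace ℝ (Fin n))) ≃ᵐ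
        ((EuclideanSpace ℝ (Fin n)) × (EuclideanSpace ℝ (Fin n))) :=
      { toFun := fun q => (q.1 - q.2, q.2)
        invFun := fun q => (q.1 + q.2, q.2)
        left_inv := fun q => by simp
        right_inv := fun q => by simp
        measurable_toFun := (measurable_fst.sub measurable_snd).prodMk measurable_snd
        measurable_invFun := (measurable_fst.add measurable_snd).prodMk measurable_snd }
    exact e.measurableEmbedding
  have hGint : Integrable G (volume.prod volume) := by
    have := (hT.integrable_comp_emb hTemb).2 hGbase
    exact this
  have hGeq : ∫ q, G q ∂(volume.prod volume) = C₀ * L := by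
    have h1 := hT.integral_comp hTemb (fun q : (EuclideanSpace ℝ (Fin n)) × (EuclideanSpace ℝ (Fin n)) => g q.1 * ‖u q.2‖^2)
    have h2 : ∫ q : (EuclideanSpace ℝ (Fin n)) × (EuclideanSpace ℝ (Fin n)), g q.1 * ‖u q.2‖^2 ∂(volume.prod volume) = C₀ * L :=
      integral_prod_mul g (fun x => ‖u x‖^2)
    rw [← h2, ← h1]
  -- pointwise comparison
  have key : ∀ q : (EuclideanSpace ℝ (Fin n)) × (EuclideanSpace ℝ (Fin n)), magP q ≤ 2 * nmP q + 2 * G q ∧ nmP q ≤ 2 * magP q + 2 * G q := by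
    rintro ⟨x, y⟩
    rcases eq_or_ne x y with rfl | hxy
    · have hd : ‖x - x‖ ^ p = 0 := by
        rw [sub_self, norm_zero, Real.zero_rpow hp0.ne']
      constructor
      · simp only [hmagP, hnmP, hGdef, hd, div_zero]
        have : g (x - x) = 0 := by
          rw [sub_self]
          simp [hgdef, norm_zero, Real.zero_rpow hp0.ne', div_zero]
        rw [this]; norm_num
      · simp only [hmagP, hnmP, hGdef, hd, div_zero]
        have : g (x - x) = 0 := by
          rw [sub_self]
          simp [hgdef, norm_zero, Real.zero_rpow hp0.ne', div_zero]
        rw [this]; norm_num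
    · have hz0 : 0 < ‖x - y‖ := by
        rw [norm_pos_iff, sub_ne_zero]; exact hxy
      have hd : 0 < ‖x - y‖ ^ p := Real.rpow_pos_of_pos hz0 _
      set m : ℝ := min (M * ‖x - y‖) 2 with hm
      have hm0 : 0 ≤ m := le_min (by positivity) (by norm_num)
      have hGval : G (x, y) = (m^2 / ‖x - y‖ ^ p) * ‖u y‖^2 := rfl
      have hsplit1 : ‖u x - phase A x y * u y‖ ≤ ‖u x - u y‖ + m * ‖u y‖ := by
        have h1 : u x - phase A x y * u y = (u x - u y) + (1 - phase A x y) * u y := by ring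
        rw [h1]
        refine (norm_add_le _ _).trans ?_
        rw [norm_mul]
        exact add_le_add_right (mul_le_mul_of_nonneg_right (hph1 x y) (norm_nonneg _)) _
      have hsplit2 : ‖u x - u y‖ ≤ ‖u x - phase A x y * u y‖ + m * ‖u y‖ := by
        have h1 : u x - u y = (u x - phase A x y * u y) + (phase A x y - 1) * u y := by ring
        rw [h1]
        refine (norm_add_le _ _).trans ?_
        rw [norm_mul, norm_sub_rev (phase A x y) 1]
        exact add_le_add_right (mul_le_mul_of_nonneg_right (hph1 x y) (norm_nonneg _)) _
      constructor
      · have hsq : ‖u x - phase A x y * u y‖^2 ≤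
            2 * ‖u x - u y‖^2 + 2 * (m * ‖u y‖)^2 := by
          have ha2 := pow_le_pow_left₀ (norm_nonneg _) hsplit1 2
          nlinarith [ha2, sq_nonneg (‖u x - u y‖ - m * ‖u y‖)]
        calc magP (x, y) ≤ (2 * ‖u x - u y‖^2 + 2 * (m * ‖u y‖)^2) / ‖x - y‖ ^ p :=
              div_le_div_of_nonneg_right hsq hd.le |>.trans_eq rfl
          _ = 2 * nmP (x, y) + 2 * G (x, y) := by
              rw [hGval, hnmP]
              field_simp
      · have hsq : ‖u x - u y‖^2 ≤
            2 * ‖u x - phase A x y * u y‖^2 + 2 * (m * ‖u y‖)^2 := by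
          have ha2 := pow_le_pow_left₀ (norm_nonneg _) hsplit2 2
          nlinarith [ha2, sq_nonneg (‖u x - phase A x y * u y‖ - m * ‖u y‖)]
        calc nmP (x, y) ≤ (2 * ‖u x - phase A x y * u y‖^2 + 2 * (m * ‖u y‖)^2) / ‖x - y‖ ^ p :=
              div_le_div_of_nonneg_right hsq hd.le |>.trans_eq rfl
          _ = 2 * magP (x, y) + 2 * G (x, y) := by
              rw [hGval, hmagP]
              field_simp
  -- measurability of the magnetic integrand
  have humeas : AEStronglyMeasurable u volume := hu2.aestronglyMeasurable
  have hphmeas : Measurable (fun q : (EuclideanSpace ℝ (Fin n)) × (EuclideanSpace ℝ (Fin n)) => phase A q.1 q.2) := by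
    have hθ : Measurable (fun q : (EuclideanSpace ℝ (Fin n)) × (EuclideanSpace ℝ (Fin n)) =>
        (inner ℝ (q.1 - q.2) (A ((2:ℝ)⁻¹ • (q.1 + q.2))) : ℝ)) := by
      apply Measurable.inner
      · exact measurable_fst.sub measurable_snd
      · exact hA.comp ((measurable_fst.add measurable_snd).const_smul ((2:ℝ)⁻¹))
    exact Complex.measurable_exp.comp
      ((Complex.measurable_ofReal.comp hθ).const_mul Complex.I)
  have hmagSM : AEStronglyMeasurable magP (volume.prod volume) := by
    have h1 : AEStronglyMeasurable (fun q : (EuclideanSpace ℝ (Fin n)) × (EuclideanSpace ℝ (Fin n)) => u q.1) (volume.prod volume) :=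
      humeas.comp_fst
    have h2 : AEStronglyMeasurable (fun q : (EuclideanSpace ℝ (Fin n)) × (EuclideanSpace ℝ (Fin n)) => u q.2) (volume.prod volume) :=
      humeas.comp_snd
    have h3 : AEStronglyMeasurable
        (fun q : (EuclideanSpace ℝ (Fin n)) × (EuclideanSpace ℝ (Fin n)) => u q.1 - phase A q.1 q.2 * u q.2) (volume.prod volume) :=
      h1.sub (hphmeas.aestronglyMeasurable.mul h2)
    have h4 : AEStronglyMeasurable
        (fun q : (EuclideanSpace ℝ (Fin n)) × (EuclideanSpace ℝ (Fin n)) => ‖u q.1 - phase A q.1 q.2 * u q.2‖^2) (volume.prod volume) := by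
      have := h3.norm
      exact (this.aemeasurable.pow_const 2).aestronglyMeasurable
    have h5 : Measurable (fun q : (EuclideanSpace ℝ (Fin n)) × (EuclideanSpace ℝ (Fin n)) => ‖q.1 - q.2‖ ^ p) :=
      (measurable_fst.sub measurable_snd).norm.pow_const p
    exact (h4.aemeasurable.div h5.aemeasurable).aestronglyMeasurable
  -- integrability of the magnetic integrand
  have hmagInt : Integrable magP (volume.prod volume) := by
    refine Integrable.mono' ((hnmInt.const_mul 2).add (hGint.const_mul 2)) hmagSM ?_
    apply Filter.Eventually.of_forall
    intro q
    rw [Real.norm_of_nonneg (hmagP_nonneg q)]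
    exact (key q).1
  -- identify the seminorms with product integrals
  have hgagA : gagASq s A u = ∫ q, magP q ∂(volume.prod volume) := by
    rw [gagASq]
    exact integral_integral hmagInt
  have hgagS : gagSq s u = ∫ q, nmP q ∂(volume.prod volume) := by
    rw [gagSq]
    exact integral_integral hnmInt
  have hgagS0 : 0 ≤ gagSq s u := by
    rw [hgagS]; exact integral_nonneg hnmP_nonneg
  have hgagA0 : 0 ≤ gagASq s A u := by
    rw [hgagA]; exact integral_nonneg hmagP_nonneg
  -- the two integral inequalities
  have hRHSint : Integrable (fun q : (EuclideanSpace ℝ (Fin n)) × (EuclideanSpace ℝ (Fin n)) => 2 * nmP q + 2 * G q) (volume.prod volume) :=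
    (hnmInt.const_mul 2).add (hGint.const_mul 2)
  have hRHSint' : Integrable (fun q : (EuclideanSpace ℝ (Fin n)) × (EuclideanSpace ℝ (Fin n)) => 2 * magP q + 2 * G q) (volume.prod volume) :=
    (hmagInt.const_mul 2).add (hGint.const_mul 2)
  have hup : gagASq s A u ≤ 2 * gagSq s u + 2 * (C₀ * L) := by
    rw [hgagA, hgagS, ← hGeq]
    calc ∫ q, magP q ∂(volume.prod volume)
        ≤ ∫ q, (2 * nmP q + 2 * G q) ∂(volume.prod volume) :=
          integral_mono hmagInt hRHSint fun q => (key q).1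
      _ = 2 * (∫ q, nmP q ∂(volume.prod volume)) + 2 * ∫ q, G q ∂(volume.prod volume) := by
          rw [integral_add (hnmInt.const_mul 2) (hGint.const_mul 2),
            integral_const_mul, integral_const_mul]
  have hdown : gagSq s u ≤ 2 * gagASq s A u + 2 * (C₀ * L) := by
    rw [hgagA, hgagS, ← hGeq]
    calc ∫ q, nmP q ∂(volume.prod volume)
        ≤ ∫ q, (2 * magP q + 2 * G q) ∂(volume.prod volume) :=
          integral_mono hnmInt hRHSint' fun q => (key q).2
      _ = 2 * (∫ q, magP q ∂(volume.prod volume)) + 2 * ∫ q, G q ∂(volume.prod volume) := by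
          rw [integral_add (hmagInt.const_mul 2) (hGint.const_mul 2),
            integral_const_mul, integral_const_mul]
  -- combine
  have hsqK : Real.sqrt K ≠ 0 := by positivity
  have hnormA : hsNormA s A u = Real.sqrt (L + gagASq s A u) := rfl
  have hnorm : hsNorm s u = Real.sqrt (L + gagSq s u) := rfl
  have hupper : hsNormA s A u ≤ Real.sqrt K * hsNorm s u := by
    rw [hnormA, hnorm, ← Real.sqrt_mul hK0.le]
    apply Real.sqrt_le_sqrt
    nlinarith
  have hlower : hsNorm s u ≤ Real.sqrt K * hsNormA s A u := by
    rw [hnormA, hnorm, ← Real.sqrt_mul hK0.le]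
    apply Real.sqrt_le_sqrt
    nlinarith
  constructor
  · rw [inv_mul_le_iff₀ (by positivity : (0:ℝ) < Real.sqrt K)]
    exact hlower
  · exact hupper
end
end

section
/- Exterior locality of the magnetic fractional operator: let 0 < s < 1, and suppose Ω ∪ supp A ⊂ B_r(0) for some r > 0. Let W be a nonempty open set with W ∩ B_{3r}(0) = ∅. Then for all u ∈ C_c^∞(Ω) and v ∈ C_c^∞(W), ⟨(𝓛^s − 𝓛^s_A) u, v⟩ = 0; i.e. 𝓛^s u = 𝓛^s_A u as distributions on W for every u ∈ H̃^s(Ω). -/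
open MeasureTheory Complex Filter Topology

noncomputable section

variable {n : ℕ}

/-- exterior locality: if `Ω ∪ supp A ⊆ B_r(0)` and `W ∩ B_{3r}(0) = ∅`,
then `⟨(𝓛^s - 𝓛^s_A) u, v⟩ = 0` for all `u ∈ C_c^∞(Ω)`, `v ∈ C_c^∞(W)`. -/
theorem exterior_locality (s : ℝ) (hs : 0 < s) (hs1 : s < 1) (r : ℝ) (hr : 0 < r)
    (Ω : Set (EuclideanSpace ℝ (Fin n))) (hΩo : IsOpen Ω)
    (hΩr : Ω ⊆ Metric.ball (0 : EuclideanSpace ℝ (Fin n)) r)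
    (A : EuclideanSpace ℝ (Fin n) → EuclideanSpace ℝ (Fin n)) (M : ℝ)
    (hA : Measurable A) (hM : ∀ z, ‖A z‖ ≤ M)
    (hAr : ∀ z, z ∉ Metric.ball (0 : EuclideanSpace ℝ (Fin n)) r → A z = 0)
    (W : Set (EuclideanSpace ℝ (Fin n))) (hWo : IsOpen W) (hWne : W.Nonempty)
    (hW : W ∩ Metric.ball (0 : EuclideanSpace ℝ (Fin n)) (3 * r) = ∅)
    (K : EuclideanSpace ℝ (Fin n) → EuclideanSpace ℝ (Fin n) → ℝ)
    (C₁ C₂ : ℝ) (hC₁ : 0 < C₁) (hC₂ : 0 < C₂) (hK : KernelComp s K C₁ C₂)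
    (u v : EuclideanSpace ℝ (Fin n) → ℂ)
    (hu : ContDiff ℝ (⊤ : ℕ∞) u) (hcu : HasCompactSupport u) (hsu : tsupport u ⊆ Ω)
    (hv : ContDiff ℝ (⊤ : ℕ∞) v) (hcv : HasCompactSupport v) (hsv : tsupport v ⊆ W) :
    LformNM K u v - Lform K A u v = 0 := by

  have key : ∀ x y : EuclideanSpace ℝ (Fin n),
      (u x - u y) * (v x - v y) * ((K x y : ℝ) : ℂ) =
      (u x - phase A x y * u y) * (v x - (starRingEnd ℂ) (phase A x y) * v y)
        * ((K x y : ℝ) : ℂ) := by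
    -- support facts
    have hWball : ∀ x ∈ W, (3 : ℝ) * r ≤ ‖x‖ := by
      intro x hx
      by_contra h
      push_neg at h
      have : x ∈ W ∩ Metric.ball (0 : EuclideanSpace ℝ (Fin n)) (3 * r) :=
        ⟨hx, by simpa [Metric.mem_ball, dist_zero_right] using h⟩
      simp [hW] at this
    have huW : ∀ x, (3 : ℝ) * r ≤ ‖x‖ → u x = 0 := by
      intro x hx
      apply image_eq_zero_of_notMem_tsupport
      intro hmem
      have := hΩr (hsu hmem)
      rw [Metric.mem_ball, dist_zero_right] at this
      linarith
    have hvΩ : ∀ y, ‖y‖ < 3 * r → v y = 0 := by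
      intro y hy
      apply image_eq_zero_of_notMem_tsupport
      intro hmem
      exact absurd (hWball y (hsv hmem)) (by linarith)
    have huΩ : ∀ y, u y ≠ 0 → ‖y‖ < r := by
      intro y hy
      have : y ∈ tsupport u := subset_closure (by simpa [Function.mem_support] using hy)
      have := hΩr (hsu this)
      simpa [Metric.mem_ball, dist_zero_right] using this
    have hvW : ∀ y, v y ≠ 0 → (3 : ℝ) * r ≤ ‖y‖ := by
      intro y hy
      exact hWball y (hsv (subset_closure (by simpa [Function.mem_support] using hy)))
    have hphase : ∀ x y : EuclideanSpace ℝ (Fin n),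
        r ≤ ‖(2:ℝ)⁻¹ • (x + y)‖ → phase A x y = 1 := by
      intro x y h
      have hA0 : A ((2:ℝ)⁻¹ • (x + y)) = 0 := by
        apply hAr
        rw [Metric.mem_ball, dist_zero_right]
        push_neg
        exact h
      unfold phase
      rw [hA0, inner_zero_right]
      simp
    have hmid : ∀ x y : EuclideanSpace ℝ (Fin n),
        (3 : ℝ) * r ≤ ‖x‖ → ‖y‖ < r → r ≤ ‖(2:ℝ)⁻¹ • (x + y)‖ := by
      intro x y hx hy
      have h1 : ‖(2:ℝ)⁻¹ • (x + y)‖ = 2⁻¹ * ‖x + y‖ := by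
        rw [norm_smul]
        norm_num
      have h2 : ‖x‖ ≤ ‖x + y‖ + ‖y‖ := by
        calc ‖x‖ = ‖x + y - y‖ := by rw [add_sub_cancel_right]
        _ ≤ ‖x + y‖ + ‖y‖ := norm_sub_le _ _
      rw [h1]
      linarith
    intro x y
    by_cases hvx : v x = 0
    · by_cases hvy : v y = 0
      · simp [hvx, hvy]
      · -- y ∈ W, so u y = 0
        have hyW : (3 : ℝ) * r ≤ ‖y‖ := hvW y hvy
        have huy : u y = 0 := huW y hyW
        by_cases hux : u x = 0
        · simp [hux, huy]
        · have hxr : ‖x‖ < r := huΩ x hux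
          have : phase A x y = 1 := by
            apply hphase
            have := hmid y x hyW hxr
            rwa [add_comm] at this
          simp [this, huy]
    · -- x ∈ W, so u x = 0
      have hxW : (3 : ℝ) * r ≤ ‖x‖ := hvW x hvx
      have hux : u x = 0 := huW x hxW
      by_cases huy : u y = 0
      · simp [hux, huy]
      · have hyr : ‖y‖ < r := huΩ y huy
        have hvy : v y = 0 := hvΩ y (by linarith)
        have : phase A x y = 1 := hphase x y (hmid x y hxW hyr)
        simp [this, hux, hvy]
  simp only [LformNM, Lform, key, sub_self]
end
end

section
/- Uniqueness of the electric potential: let 0 < s < 1, Ω a bounded Lipschitz domain, A ∈ L^∞(ℝⁿ;ℝⁿ), q₁, q₂ ∈ L^∞(Ω) regular for 𝓛^s_A, Ω ∪ supp A ⊂ B_r(0), and W₁, W₂ ⊂ Ω_e open sets with W_j \ closure(B_{3r}(0)) ≠ ∅. Assume the Runge approximation property for 𝓛^s_A + q₁ with exterior data in W₁ and for 𝓛^s_{−A} + q₂ with exterior data in W₂, and the integral identity ⟨(Λ_{A,q₁} − Λ_{A,q₂})g₁, g₂⟩ = ∫_Ω (q₁−q₂) u₁⁺ u₂⁻. If Λ_{A,q₁}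 g|_{W₂} = Λ_{A,q₂} g|_{W₂} for all g ∈ C_c^∞(W₁), then q₁ = q₂ in Ω. -/
open MeasureTheory Complex Filter Topology

noncomputable section

variable {n : ℕ}

private lemma aux_arith (a C ε : ℝ) (ha : 0 ≤ a) (hC : 0 < C) (hε : 0 < ε) :
    a * C * (ε / (2 * C * (a + 1))) ≤ ε / 2 := by
  have hd : 0 < 2 * C * (a + 1) := by positivity
  rw [mul_div_assoc' (a * C) ε (2 * C * (a + 1)), div_le_div_iff₀ hd two_pos]
  nlinarith [mul_pos hC hε]

/-- uniqueness of the electric potential: if the DN maps for `q₁` and `q₂`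
agree on exterior data in `W₁`, measured in `W₂`, then `q₁ = q₂` in `Ω`. -/
theorem potential_uniqueness (s : ℝ) (hs : 0 < s) (hs1 : s < 1) (r : ℝ) (hr : 0 < r)
    (Ω : Set (EuclideanSpace ℝ (Fin n))) (hΩo : IsOpen Ω) (hΩb : Bornology.IsBounded Ω)
    (hΩr : Ω ⊆ Metric.ball (0 : EuclideanSpace ℝ (Fin n)) r)
    (A : EuclideanSpace ℝ (Fin n) → EuclideanSpace ℝ (Fin n)) (M : ℝ)
    (hA : Measurable A) (hM : ∀ z, ‖A z‖ ≤ M)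
    (hAr : ∀ z, z ∉ Metric.ball (0 : EuclideanSpace ℝ (Fin n)) r → A z = 0)
    (q₁ q₂ : EuclideanSpace ℝ (Fin n) → ℝ) (Cq : ℝ)
    (hq₁b : ∀ x ∈ Ω, |q₁ x| ≤ Cq) (hq₂b : ∀ x ∈ Ω, |q₂ x| ≤ Cq)
    (hq₁m : Measurable q₁) (hq₂m : Measurable q₂)
    (W₁ W₂ : Set (EuclideanSpace ℝ (Fin n))) (hW₁o : IsOpen W₁) (hW₂o : IsOpen W₂)
    (hW₁e : W₁ ⊆ (closure Ω)ᶜ) (hW₂e : W₂ ⊆ (closure Ω)ᶜ)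
    (hW₁ne : (W₁ \ Metric.closedBall (0 : EuclideanSpace ℝ (Fin n)) (3 * r)).Nonempty)
    (hW₂ne : (W₂ \ Metric.closedBall (0 : EuclideanSpace ℝ (Fin n)) (3 * r)).Nonempty)
    -- solution operators `P₁ = P_{A,q₁}` and `P₂ = P_{-A,q₂}`
    (P₁ P₂ : (EuclideanSpace ℝ (Fin n) → ℂ) → EuclideanSpace ℝ (Fin n) → ℂ)
    (hP₁L : ∀ g, MemLp (P₁ g) 2 (volume.restrict Ω))
    (hP₂L : ∀ g, MemLp (P₂ g) 2 (volume.restrict Ω))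
    -- Runge approximation for `𝓛^s_A + q₁` with exterior data in `W₁`
    (hRunge₁ : ∀ f : EuclideanSpace ℝ (Fin n) → ℂ, MemLp f 2 (volume.restrict Ω) →
      ∀ ε : ℝ, 0 < ε → ∃ g, ContDiff ℝ (⊤ : ℕ∞) g ∧ HasCompactSupport g ∧ tsupport g ⊆ W₁ ∧
        eLpNorm (fun x => P₁ g x - f x) 2 (volume.restrict Ω) < ENNReal.ofReal ε)
    -- Runge approximation for `𝓛^s_{-A} + q₂` with exterior data in `W₂`
    (hRunge₂ : ∀ f : EuclideanSpace ℝ (Fin n) → ℂ, MemLp f 2 (volume.restrict Ω) →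
      ∀ ε : ℝ, 0 < ε → ∃ g, ContDiff ℝ (⊤ : ℕ∞) g ∧ HasCompactSupport g ∧ tsupport g ⊆ W₂ ∧
        eLpNorm (fun x => P₂ g x - f x) 2 (volume.restrict Ω) < ENNReal.ofReal ε)
    -- the DN maps and the integral identity
    (Λ₁ Λ₂ : (EuclideanSpace ℝ (Fin n) → ℂ) → (EuclideanSpace ℝ (Fin n) → ℂ) → ℂ)
    (hId : ∀ g₁ g₂, ContDiff ℝ (⊤ : ℕ∞) g₁ → HasCompactSupport g₁ → tsupport g₁ ⊆ W₁ →
      ContDiff ℝ (⊤ : ℕ∞) g₂ → HasCompactSupport g₂ → tsupport g₂ ⊆ W₂ →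
      Λ₁ g₁ g₂ - Λ₂ g₁ g₂ =
        ∫ x in Ω, ((q₁ x - q₂ x : ℝ) : ℂ) * P₁ g₁ x * P₂ g₂ x)
    -- exterior partial measurements agree: `Λ_{A,q₁} g|_{W₂} = Λ_{A,q₂} g|_{W₂}`
    (hDN : ∀ g, ContDiff ℝ (⊤ : ℕ∞) g → HasCompactSupport g → tsupport g ⊆ W₁ →
      ∀ h, ContDiff ℝ (⊤ : ℕ∞) h → HasCompactSupport h → tsupport h ⊆ W₂ → Λ₁ g h = Λ₂ g h) :
    ∀ᵐ x ∂(volume.restrict Ω), q₁ x = q₂ x := by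
  classical
  set μ := volume.restrict Ω with hμdef
  haveI hfin : IsFiniteMeasure μ := by
    constructor
    rw [hμdef, Measure.restrict_apply_univ]
    exact hΩb.measure_lt_top
  set qc : EuclideanSpace ℝ (Fin n) → ℂ := fun x => ((q₁ x - q₂ x : ℝ) : ℂ) with hqcdef
  have hqm : Measurable qc := Complex.measurable_ofReal.comp (hq₁m.sub hq₂m)
  set C : ℝ := 2 * |Cq| + 1 with hCdef
  have hCpos : 0 < C := by positivity
  have hqbd : ∀ᵐ x ∂μ, ‖qc x‖ ≤ C := by
    refine (ae_restrict_mem hΩo.measurableSet).mono fun x hx => ?_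
    have a1 := abs_le.mp (hq₁b x hx)
    have a2 := abs_le.mp (hq₂b x hx)
    have hCq : Cq ≤ |Cq| := le_abs_self Cq
    have : ‖qc x‖ = |q₁ x - q₂ x| := by
      simp [hqcdef, ← Complex.ofReal_sub, Complex.norm_real, Real.norm_eq_abs]
    rw [this]
    refine abs_le.mpr ⟨by linarith, by linarith⟩
  have hqtop : MemLp qc ⊤ μ := memLp_top_of_bound hqm.aestronglyMeasurable C hqbd
  have hq2 : MemLp qc 2 μ := hqtop.mono_exponent le_top
  -- Hölder for products of two L² functions
  have hold : ∀ a b : EuclideanSpace ℝ (Fin n) → ℂ, AEStronglyMeasurable a μ →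
      AEStronglyMeasurable b μ →
      eLpNorm (fun x => a x * b x) 1 μ ≤ eLpNorm a 2 μ * eLpNorm b 2 μ := by
    intro a b ha hb
    haveI : ENNReal.HolderTriple 2 2 1 := ⟨by simp [ENNReal.inv_two_add_inv_two]⟩
    have := eLpNorm_le_eLpNorm_mul_eLpNorm'_of_norm (p := 2) (q := 2) (r := 1) ha hb (· * ·) 1
      (Filter.Eventually.of_forall fun x => by rw [norm_mul]; simp)
    simpa using this
  have hmul_int : ∀ a b : EuclideanSpace ℝ (Fin n) → ℂ, MemLp a 2 μ → MemLp b 2 μ →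
      Integrable (fun x => a x * b x) μ := by
    intro a b ha hb
    refine memLp_one_iff_integrable.mp ⟨ha.1.mul hb.1, ?_⟩
    exact lt_of_le_of_lt (hold a b ha.1 hb.1) (ENNReal.mul_lt_top ha.2 hb.2)
  have hnormInt : ∀ t : EuclideanSpace ℝ (Fin n) → ℂ,
      ‖∫ x, t x ∂μ‖ ≤ (eLpNorm t 1 μ).toReal := by
    intro t
    rw [eLpNorm_one_eq_lintegral_enorm]
    simp_rw [← ofReal_norm]
    exact norm_integral_le_lintegral_norm t
  -- vanishing of the integral against products of solutions
  have hzero : ∀ g₁ g₂, ContDiff ℝ (⊤ : ℕ∞) g₁ → HasCompactSupport g₁ → tsupport g₁ ⊆ W₁ →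
      ContDiff ℝ (⊤ : ℕ∞) g₂ → HasCompactSupport g₂ → tsupport g₂ ⊆ W₂ →
      ∫ x, qc x * P₁ g₁ x * P₂ g₂ x ∂μ = 0 := by
    intro g₁ g₂ h1 h2 h3 h4 h5 h6
    have hid := hId g₁ g₂ h1 h2 h3 h4 h5 h6
    rw [hDN g₁ h1 h2 h3 g₂ h4 h5 h6, sub_self] at hid
    exact hid.symm
  -- key claim: the integral of `qc * f` vanishes for every `f ∈ L²(Ω)`
  have key : ∀ f : EuclideanSpace ℝ (Fin n) → ℂ, MemLp f 2 μ →
      ∫ x, qc x * f x ∂μ = 0 := by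
    intro f hf
    set z := ∫ x, qc x * f x ∂μ with hzdef
    have hz : ∀ ε : ℝ, 0 < ε → ‖z‖ ≤ ε := by
      intro ε hε
      set W : ENNReal := (μ Set.univ) ^ (((2 : ENNReal).toReal)⁻¹) with hWdef
      have hWt : W ≠ ⊤ :=
        ENNReal.rpow_ne_top_of_nonneg (by norm_num) (measure_ne_top μ _)
      set WR : ℝ := W.toReal with hWRdef
      have hWR : 0 ≤ WR := ENNReal.toReal_nonneg
      set ε₁ : ℝ := ε / (2 * C * (WR + 1)) with hε₁def
      have hε₁ : 0 < ε₁ := by positivity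
      obtain ⟨g₁, hg₁s, hg₁c, hg₁t, hg₁⟩ := hRunge₁ f hf ε₁ hε₁
      set u₁ := P₁ g₁ with hu₁def
      have hu₁ : MemLp u₁ 2 μ := hP₁L g₁
      set N : ℝ := (eLpNorm u₁ 2 μ).toReal with hNdef
      have hN : 0 ≤ N := ENNReal.toReal_nonneg
      set ε₂ : ℝ := ε / (2 * C * (N + 1)) with hε₂def
      have hε₂ : 0 < ε₂ := by positivity
      obtain ⟨g₂, hg₂s, hg₂c, hg₂t, hg₂⟩ :=
        hRunge₂ (fun _ => (1 : ℂ)) (memLp_const 1) ε₂ hε₂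
      set u₂ := P₂ g₂ with hu₂def
      have hu₂ : MemLp u₂ 2 μ := hP₂L g₂
      have hvanish : ∫ x, qc x * u₁ x * u₂ x ∂μ = 0 :=
        hzero g₁ g₂ hg₁s hg₁c hg₁t hg₂s hg₂c hg₂t
      -- the three pieces
      have hg₁' : eLpNorm (fun x => f x - u₁ x) 2 μ < ENNReal.ofReal ε₁ := by
        have hneg : (fun x => f x - u₁ x) = -(fun x => u₁ x - f x) := by funext x; simp [hu₁def]
        rw [hneg, eLpNorm_neg]
        exact hg₁
      have hg₂' : eLpNorm (fun x => (1 : ℂ) - u₂ x) 2 μ < ENNReal.ofReal ε₂ := by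
        have hneg : (fun x => (1 : ℂ) - u₂ x) = -(fun x => u₂ x - 1) := by funext x; simp [hu₂def]
        rw [hneg, eLpNorm_neg]
        exact hg₂
      have hfu₁ : MemLp (fun x => f x - u₁ x) 2 μ := hf.sub hu₁
      have hqu₁b : eLpNorm (fun x => qc x * u₁ x) 2 μ ≤ eLpNorm qc ⊤ μ * eLpNorm u₁ 2 μ := by
        have := eLpNorm_le_eLpNorm_mul_eLpNorm'_of_norm (p := ⊤) (q := 2) (r := 2)
          hqm.aestronglyMeasurable hu₁.1 (· * ·) 1
          (Filter.Eventually.of_forall fun x => by rw [norm_mul]; simp)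
        simpa using this
      have hqu₁ : MemLp (fun x => qc x * u₁ x) 2 μ :=
        ⟨hqm.aestronglyMeasurable.mul hu₁.1,
          lt_of_le_of_lt hqu₁b (ENNReal.mul_lt_top hqtop.2 hu₁.2)⟩
      have hone_u₂ : MemLp (fun x => (1 : ℂ) - u₂ x) 2 μ := (memLp_const 1).sub hu₂
      have I₁ : Integrable (fun x => qc x * (f x - u₁ x)) μ := hmul_int _ _ hq2 hfu₁
      have I₂ : Integrable (fun x => qc x * u₁ x * (1 - u₂ x)) μ := hmul_int _ _ hqu₁ hone_u₂
      have I₃ : Integrable (fun x => qc x * u₁ x * u₂ x) μ := hmul_int _ _ hqu₁ hu₂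
      have hsplit : z = (∫ x, qc x * (f x - u₁ x) ∂μ) +
          (∫ x, qc x * u₁ x * (1 - u₂ x) ∂μ) := by
        rw [hzdef]
        calc ∫ x, qc x * f x ∂μ
            = ∫ x, (qc x * (f x - u₁ x) + qc x * u₁ x * (1 - u₂ x)) + qc x * u₁ x * u₂ x ∂μ := by
              congr 1; funext x; ring
          _ = (∫ x, qc x * (f x - u₁ x) + qc x * u₁ x * (1 - u₂ x) ∂μ) +
              ∫ x, qc x * u₁ x * u₂ x ∂μ := integral_add (I₁.add I₂) I₃
          _ = ((∫ x, qc x * (f x - u₁ x) ∂μ) + ∫ x, qc x * u₁ x * (1 - u₂ x) ∂μ) +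
              ∫ x, qc x * u₁ x * u₂ x ∂μ := by rw [integral_add I₁ I₂]
          _ = (∫ x, qc x * (f x - u₁ x) ∂μ) + ∫ x, qc x * u₁ x * (1 - u₂ x) ∂μ := by
              rw [hvanish, add_zero]
      -- bound for the first piece
      have hq2b : eLpNorm qc 2 μ ≤ W * ENNReal.ofReal C := by
        simpa [hWdef] using eLpNorm_le_of_ae_bound (p := (2 : ENNReal)) hqbd
      have hqtopb : eLpNorm qc ⊤ μ ≤ ENNReal.ofReal C := by
        simpa using eLpNorm_le_of_ae_bound (p := (⊤ : ENNReal)) hqbd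
      have hb₁ : ‖∫ x, qc x * (f x - u₁ x) ∂μ‖ ≤ ε / 2 := by
        refine le_trans (hnormInt _) ?_
        have h1 : eLpNorm (fun x => qc x * (f x - u₁ x)) 1 μ ≤
            (W * ENNReal.ofReal C) * ENNReal.ofReal ε₁ := by
          refine le_trans (hold _ _ hqm.aestronglyMeasurable hfu₁.1) ?_
          exact mul_le_mul' hq2b hg₁'.le
        have h2 : ((W * ENNReal.ofReal C) * ENNReal.ofReal ε₁).toReal = WR * C * ε₁ := by
          rw [ENNReal.toReal_mul, ENNReal.toReal_mul, ENNReal.toReal_ofReal hCpos.le,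
            ENNReal.toReal_ofReal hε₁.le]
        refine le_trans (ENNReal.toReal_mono ?_ h1) ?_
        · exact ENNReal.mul_ne_top (ENNReal.mul_ne_top hWt ENNReal.ofReal_ne_top)
            ENNReal.ofReal_ne_top
        · rw [h2, hε₁def]
          exact aux_arith WR C ε hWR hCpos hε
      -- bound for the second piece
      have hb₂ : ‖∫ x, qc x * u₁ x * (1 - u₂ x) ∂μ‖ ≤ ε / 2 := by
        refine le_trans (hnormInt _) ?_
        have h1 : eLpNorm (fun x => qc x * u₁ x * (1 - u₂ x)) 1 μ ≤
            (ENNReal.ofReal C * eLpNorm u₁ 2 μ) * ENNReal.ofReal ε₂ := by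
          refine le_trans (hold _ _ hqu₁.1 hone_u₂.1) ?_
          exact mul_le_mul' (le_trans hqu₁b (mul_le_mul_left hqtopb _)) hg₂'.le
        have h2 : ((ENNReal.ofReal C * eLpNorm u₁ 2 μ) * ENNReal.ofReal ε₂).toReal
            = C * N * ε₂ := by
          rw [ENNReal.toReal_mul, ENNReal.toReal_mul, ENNReal.toReal_ofReal hCpos.le,
            ENNReal.toReal_ofReal hε₂.le, hNdef]
        refine le_trans (ENNReal.toReal_mono ?_ h1) ?_
        · exact ENNReal.mul_ne_top (ENNReal.mul_ne_top ENNReal.ofReal_ne_top hu₁.2.ne)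
            ENNReal.ofReal_ne_top
        · rw [h2, hε₂def, mul_comm C N]
          exact aux_arith N C ε hN hCpos hε
      calc ‖z‖ ≤ ‖∫ x, qc x * (f x - u₁ x) ∂μ‖ + ‖∫ x, qc x * u₁ x * (1 - u₂ x) ∂μ‖ := by
            rw [hsplit]; exact norm_add_le _ _
        _ ≤ ε / 2 + ε / 2 := add_le_add hb₁ hb₂
        _ = ε := by ring
    by_contra hne
    have h0 : 0 < ‖z‖ := norm_pos_iff.mpr hne
    linarith [hz (‖z‖ / 2) (by linarith)]
  -- conclude: take `f = qc`
  have hfinal := key qc hq2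
  have hreal : ∫ x, (q₁ x - q₂ x) ^ 2 ∂μ = 0 := by
    have hint : Integrable (fun x => qc x * qc x) μ := hmul_int _ _ hq2 hq2
    have h2 : ∫ x, RCLike.re (qc x * qc x) ∂μ = 0 := by
      rw [integral_re hint, hfinal, map_zero]
    rw [← h2]
    congr 1; funext x
    simp [hqcdef, Complex.mul_re]
    ring
  have hintsq : Integrable (fun x => (q₁ x - q₂ x) ^ 2) μ := by
    refine memLp_one_iff_integrable.mp
      ((memLp_top_of_bound ((hq₁m.sub hq₂m).pow_const 2).aestronglyMeasurable (C ^ 2) ?_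
        ).mono_exponent le_top)
    refine hqbd.mono fun x hx => ?_
    have hx' : |q₁ x - q₂ x| ≤ C := by
      have : ‖qc x‖ = |q₁ x - q₂ x| := by
        simp [hqcdef, ← Complex.ofReal_sub, Complex.norm_real, Real.norm_eq_abs]
      rwa [this] at hx
    have h2 : (q₁ x - q₂ x) ^ 2 ≤ C ^ 2 := by
      nlinarith [abs_nonneg (q₁ x - q₂ x), _root_.sq_abs (q₁ x - q₂ x)]
    have h3 : ‖(q₁ x - q₂ x) ^ 2‖ = (q₁ x - q₂ x) ^ 2 :=
      Real.norm_of_nonneg (sq_nonneg _)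
    show ‖(q₁ x - q₂ x) ^ 2‖ ≤ C ^ 2
    rw [h3]
    exact h2
  have hae := (integral_eq_zero_iff_of_nonneg (fun x => sq_nonneg _) hintsq).mp hreal
  filter_upwards [hae] with x hx
  have hx' : (q₁ x - q₂ x) ^ 2 = 0 := hx
  have h4 : q₁ x - q₂ x = 0 := by
    have := _root_.pow_eq_zero_iff (n := 2) (by norm_num) |>.mp hx'
    exact this
  linarith
end
end
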